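/- arXiv:1703.01701 — 9 statements merged into one kernel-verified Lean document; each statement's English description precedes it below -/
import Mathlib

section
/- Let N ≥ 2, let h₁, h₂ ∈ ℂᴺ be vectors such that the orthogonal projection of h₂* onto the line spanned by h₁* is nonzero and the projection of h₂* onto the orthogonal complement of that line is also nonzero, and let A₀, B₀, C₀, D₀ > 0. Define the objective F(w) = A₀|h₁ᵀw|² + B₀|h₁ᵀw|²|h₂ᵀw|² / (C₀|h₁ᵀw|² + D₀|h₂ᵀw|² + 1) for w ∈ ℂᴺ. Then there exists a real number x̄ ∈ [0,1] such that the unit vector w_opt = x̄ · Π_{h₁*}h₂*/‖Π_{h₁*}h₂*‖ + √(1−x̄²) · Π⊥_{h₁*}h₂*/‖Π⊥_{h₁*}h₂*‖ attains the supremum of F over the unit sphere {w ∈ ℂᴺ : ‖w‖ = 1}. -/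
/-!
Let `p` and `q = h₂* - p` be the components of `h₂*` along and across the line `ℂ h₁*`, and `u`,
`v` their normalisations. For a unit vector `w`, `|h₁ᵀw|` is a fixed multiple of
`x = |⟪u, w⟫|`, while the triangle and Bessel inequalities give
`|h₂ᵀw| ≤ ‖p‖ x + ‖q‖ √(1 - x²)`, with equality at `w = x u + √(1 - x²) v`. Since the objective
is increasing in `|h₂ᵀw|`, its supremum over the sphere is the maximum of a continuous function
of `x ∈ [0, 1]`.
-/

open scoped InnerProductSpace
open Set

lemma monotoneOn_mul_div_add_one {b c d s : ℝ} (hb : 0 ≤ b) (hc : 0 ≤ c) (hd : 0 ≤ d)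
    (hs : 0 ≤ s) : MonotoneOn (fun t => b * s * t / (c * s + d * t + 1)) (Ici 0) := by
  intro t (ht : 0 ≤ t) t' (ht' : 0 ≤ t') htt'
  rw [div_le_div_iff₀ (by positivity) (by positivity)]
  have : 0 ≤ b * s * (c * s + 1) * (t' - t) := by
    have := sub_nonneg.2 htt'
    positivity
  linarith

section InnerProduct

variable {𝕜 E : Type*} [RCLike 𝕜] [NormedAddCommGroup E] [InnerProductSpace 𝕜 E]

lemma orthonormal_pair_iff {u v : E} :
    Orthonormal 𝕜 ![u, v] ↔ ‖u‖ = 1 ∧ ‖v‖ = 1 ∧ ⟪u, v⟫_𝕜 = 0 := by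
  refine ⟨fun h => ⟨h.1 0, h.1 1, h.2 (show (0 : Fin 2) ≠ 1 by decide)⟩, ?_⟩
  rintro ⟨hu, hv, huv⟩
  rw [orthonormal_iff_ite]
  intro i j
  fin_cases i <;> fin_cases j <;>
    simp [inner_self_eq_norm_sq_to_K, hu, hv, huv, inner_eq_zero_symm.1 huv]

lemma norm_inner_sq_add_norm_inner_sq_le {u v : E} (huv : Orthonormal 𝕜 ![u, v]) (w : E) :
    ‖⟪u, w⟫_𝕜‖ ^ 2 + ‖⟪v, w⟫_𝕜‖ ^ 2 ≤ ‖w‖ ^ 2 := by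
  simpa [Fin.sum_univ_two] using huv.sum_inner_products_le w (s := Finset.univ)

lemma norm_add_inner_le {u v w : E} (huv : Orthonormal 𝕜 ![u, v]) (hw : ‖w‖ = 1) {α β : ℝ}
    (hα : 0 ≤ α) (hβ : 0 ≤ β) :
    ‖(α : 𝕜) * ⟪u, w⟫_𝕜 + (β : 𝕜) * ⟪v, w⟫_𝕜‖ ≤
      α * ‖⟪u, w⟫_𝕜‖ + β * √(1 - ‖⟪u, w⟫_𝕜‖ ^ 2) := by
  have hvw : ‖⟪v, w⟫_𝕜‖ ≤ √(1 - ‖⟪u, w⟫_𝕜‖ ^ 2) := by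
    rw [Real.le_sqrt (norm_nonneg _) (by nlinarith [norm_inner_sq_add_norm_inner_sq_le huv w])]
    nlinarith [norm_inner_sq_add_norm_inner_sq_le huv w]
  calc _ ≤ ‖(α : 𝕜) * ⟪u, w⟫_𝕜‖ + ‖(β : 𝕜) * ⟪v, w⟫_𝕜‖ := norm_add_le _ _
    _ = α * ‖⟪u, w⟫_𝕜‖ + β * ‖⟪v, w⟫_𝕜‖ := by
      simp only [norm_mul, RCLike.norm_ofReal, abs_of_nonneg hα, abs_of_nonneg hβ]
    _ ≤ _ := by gcongr

lemma exists_norm_inner_eq_mul_of_mem_span_singleton {h p : E} (hp : p ∈ 𝕜 ∙ h)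
    (hp0 : p ≠ 0) : ∃ m : ℝ, ∀ w, ‖⟪h, w⟫_𝕜‖ = m * ‖⟪p, w⟫_𝕜‖ := by
  obtain ⟨c, rfl⟩ := Submodule.mem_span_singleton.1 hp
  have hc : c ≠ 0 := left_ne_zero_of_smul hp0
  exact ⟨‖c‖⁻¹, fun w => by
    rw [inner_smul_left, norm_mul, RCLike.norm_conj, inv_mul_cancel_left₀ (norm_ne_zero_iff.2 hc)]⟩

lemma sum_mul_eq_inner_of_ofLp_eq_conj {ι : Type*} [Fintype ι] {h hs : EuclideanSpace 𝕜 ι}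
    (hhs : hs.ofLp = fun j => starRingEnd 𝕜 (h j)) (w : EuclideanSpace 𝕜 ι) :
    ∑ j, h j * w j = ⟪hs, w⟫_𝕜 := by
  simp [PiLp.inner_apply, hhs, mul_comm]

variable (𝕜) in
noncomputable def arcPoint (u v : E) (x : ℝ) : E := (x : 𝕜) • u + (√(1 - x ^ 2) : 𝕜) • v

section arcPoint

variable {u v : E}

lemma inner_left_arcPoint (huv : Orthonormal 𝕜 ![u, v]) (x : ℝ) :
    ⟪u, arcPoint 𝕜 u v x⟫_𝕜 = x := by
  obtain ⟨hu, -, huv⟩ := orthonormal_pair_iff.1 huv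
  simp [arcPoint, inner_add_right, inner_smul_right, inner_self_eq_norm_sq_to_K, hu, huv]

lemma inner_right_arcPoint (huv : Orthonormal 𝕜 ![u, v]) (x : ℝ) :
    ⟪v, arcPoint 𝕜 u v x⟫_𝕜 = (√(1 - x ^ 2) : ℝ) := by
  obtain ⟨-, hv, huv⟩ := orthonormal_pair_iff.1 huv
  simp [arcPoint, inner_add_right, inner_smul_right, inner_self_eq_norm_sq_to_K, hv,
    inner_eq_zero_symm.1 huv]

lemma norm_arcPoint (huv : Orthonormal 𝕜 ![u, v]) {x : ℝ} (hx : x ^ 2 ≤ 1) :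
    ‖arcPoint 𝕜 u v x‖ = 1 := by
  obtain ⟨hu, hv, huv⟩ := orthonormal_pair_iff.1 huv
  have horth : ⟪(x : 𝕜) • u, (√(1 - x ^ 2) : 𝕜) • v⟫_𝕜 = 0 := by
    simp [inner_smul_left, inner_smul_right, huv]
  have h : ‖arcPoint 𝕜 u v x‖ ^ 2 = 1 := by
    rw [arcPoint, sq, norm_add_sq_eq_norm_sq_add_norm_sq_of_inner_eq_zero _ _ horth]
    simp only [norm_smul, RCLike.norm_ofReal, hu, hv, mul_one, ← sq, sq_abs,
      Real.sq_sqrt (sub_nonneg.2 hx)]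
    ring
  exact (pow_eq_one_iff_of_nonneg (norm_nonneg _) two_ne_zero).1 h

end arcPoint

theorem exists_isGreatest_sphere_arcPoint {u v : E} (huv : Orthonormal 𝕜 ![u, v]) {α β : ℝ}
    (hα : 0 ≤ α) (hβ : 0 ≤ β) {Φ : ℝ → ℝ → ℝ} (hΦ : Continuous (Function.uncurry Φ))
    (hmono : ∀ x, MonotoneOn (Φ x) (Ici 0)) {f : E → ℝ}
    (hf : ∀ w, f w = Φ ‖⟪u, w⟫_𝕜‖ ‖(α : 𝕜) * ⟪u, w⟫_𝕜 + (β : 𝕜) * ⟪v, w⟫_𝕜‖) :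
    ∃ x ∈ Icc (0 : ℝ) 1, ‖arcPoint 𝕜 u v x‖ = 1 ∧
      IsGreatest (f '' {w | ‖w‖ = 1}) (f (arcPoint 𝕜 u v x)) := by
  set G : ℝ → ℝ := fun x => Φ x (α * x + β * √(1 - x ^ 2))
  have hG : Continuous G :=
    hΦ.comp (f := fun x : ℝ => (x, α * x + β * √(1 - x ^ 2))) (by fun_prop)
  obtain ⟨x₀, hx₀, hmax⟩ :=
    isCompact_Icc.exists_isMaxOn (nonempty_Icc.2 zero_le_one) hG.continuousOn
  have hf_arcPoint : ∀ x ∈ Icc (0 : ℝ) 1, f (arcPoint 𝕜 u v x) = G x := by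
    intro x hx
    rw [hf, inner_left_arcPoint huv, inner_right_arcPoint huv, RCLike.norm_ofReal,
      abs_of_nonneg hx.1]
    norm_cast
    rw [abs_of_nonneg (by have := hx.1; positivity)]
  have hf_le : ∀ w : E, ‖w‖ = 1 → f w ≤ G ‖⟪u, w⟫_𝕜‖ := fun w hw => by
    rw [hf]
    exact hmono _ (norm_nonneg _) (show (0 : ℝ) ≤ _ by positivity)
      (norm_add_inner_le huv hw hα hβ)
  have hmem : ∀ w : E, ‖w‖ = 1 → ‖⟪u, w⟫_𝕜‖ ∈ Icc (0 : ℝ) 1 := fun w hw =>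
    ⟨norm_nonneg _, (norm_inner_le_norm u w).trans_eq
      (by rw [(orthonormal_pair_iff.1 huv).1, hw, one_mul])⟩
  have hnorm : ‖arcPoint 𝕜 u v x₀‖ = 1 :=
    norm_arcPoint huv (pow_le_one₀ hx₀.1 hx₀.2)
  refine ⟨x₀, hx₀, hnorm, ⟨_, hnorm, rfl⟩, ?_⟩
  rintro _ ⟨w, hw, rfl⟩
  calc f w ≤ G ‖⟪u, w⟫_𝕜‖ := hf_le w hw
    _ ≤ G x₀ := hmax (hmem w hw)
    _ = f (arcPoint 𝕜 u v x₀) := (hf_arcPoint x₀ hx₀).symm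

theorem exists_isGreatest_sphere_arcPoint_of_inner_eq_zero {p q : E} (hp : p ≠ 0) (hq : q ≠ 0)
    (hpq : ⟪p, q⟫_𝕜 = 0) {Φ : ℝ → ℝ → ℝ} (hΦ : Continuous (Function.uncurry Φ))
    (hmono : ∀ x, MonotoneOn (Φ x) (Ici 0)) {f : E → ℝ}
    (hf : ∀ w, f w = Φ ‖⟪p, w⟫_𝕜‖ ‖⟪p + q, w⟫_𝕜‖) :
    ∃ x ∈ Icc (0 : ℝ) 1,
      ‖arcPoint 𝕜 ((‖p‖⁻¹ : 𝕜) • p) ((‖q‖⁻¹ : 𝕜) • q) x‖ = 1 ∧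
      IsGreatest (f '' {w | ‖w‖ = 1}) (f (arcPoint 𝕜 ((‖p‖⁻¹ : 𝕜) • p) ((‖q‖⁻¹ : 𝕜) • q) x)) := by
  have huv : Orthonormal 𝕜 ![(‖p‖⁻¹ : 𝕜) • p, (‖q‖⁻¹ : 𝕜) • q] :=
    orthonormal_pair_iff.2 ⟨norm_smul_inv_norm hp, norm_smul_inv_norm hq,
      by simp [inner_smul_left, inner_smul_right, hpq]⟩
  have hinner : ∀ {r : E}, r ≠ 0 → ∀ w, ⟪r, w⟫_𝕜 = (‖r‖ : 𝕜) * ⟪(‖r‖⁻¹ : 𝕜) • r, w⟫_𝕜 :=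
    fun hr w => by simp [inner_smul_left, hr]
  refine exists_isGreatest_sphere_arcPoint huv (norm_nonneg p) (norm_nonneg q)
    (Φ := fun x y => Φ (‖p‖ * x) y) (hΦ.comp (f := fun z : ℝ × ℝ => (‖p‖ * z.1, z.2)) (by fun_prop))
    (fun x => hmono _) fun w => ?_
  rw [hf, inner_add_left, hinner hp, hinner hq, norm_mul, RCLike.norm_ofReal, abs_norm]

end InnerProduct

theorem optimal_beamformer_structure_general (N : ℕ)
    (h₁ h₂ : EuclideanSpace ℂ (Fin N))
    (A₀ B₀ C₀ D₀ : ℝ) (hB : 0 < B₀) (hC : 0 < C₀) (hD : 0 < D₀)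
    (F : EuclideanSpace ℂ (Fin N) → ℝ)
    (hF : ∀ w, F w =
      A₀ * ‖∑ j, h₁ j * w j‖ ^ 2 +
        B₀ * ‖∑ j, h₁ j * w j‖ ^ 2 * ‖∑ j, h₂ j * w j‖ ^ 2 /
          (C₀ * ‖∑ j, h₁ j * w j‖ ^ 2 + D₀ * ‖∑ j, h₂ j * w j‖ ^ 2 + 1))
    (h₁s h₂s : EuclideanSpace ℂ (Fin N))
    (hh₁s : h₁s = fun j => starRingEnd ℂ (h₁ j))
    (hh₂s : h₂s = fun j => starRingEnd ℂ (h₂ j))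
    (p : EuclideanSpace ℂ (Fin N))
    (hp : p = (Submodule.orthogonalProjection (ℂ ∙ h₁s) h₂s : EuclideanSpace ℂ (Fin N)))
    (hpne : p ≠ 0) (hqne : h₂s - p ≠ 0) :
    ∃ x : ℝ, x ∈ Set.Icc (0:ℝ) 1 ∧
      ∀ wopt : EuclideanSpace ℂ (Fin N),
        wopt = (x : ℂ) • (‖p‖⁻¹ • p)
          + ((Real.sqrt (1 - x ^ 2) : ℝ) : ℂ) • (‖h₂s - p‖⁻¹ • (h₂s - p)) →
        ‖wopt‖ = 1 ∧ IsGreatest (F '' {w | ‖w‖ = 1}) (F wopt) := by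
  have hp_mem : p ∈ ℂ ∙ h₁s := hp ▸ SetLike.coe_mem _
  have hpq : ⟪p, h₂s - p⟫_ℂ = 0 := (Submodule.mem_orthogonal _ _).1
    (hp ▸ Submodule.sub_starProjection_mem_orthogonal h₂s) p hp_mem
  obtain ⟨m, hm⟩ := exists_norm_inner_eq_mul_of_mem_span_singleton hp_mem hpne
  set Φ : ℝ → ℝ → ℝ := fun x y =>
    A₀ * (m * x) ^ 2 + B₀ * (m * x) ^ 2 * y ^ 2 / (C₀ * (m * x) ^ 2 + D₀ * y ^ 2 + 1)
  have hΦ : Continuous (Function.uncurry Φ) :=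
    .add (by fun_prop) (.div (by fun_prop) (by fun_prop) fun z => by positivity)
  have hmono : ∀ x, MonotoneOn (Φ x) (Ici 0) := fun x =>
    ((monotoneOn_mul_div_add_one hB.le hC.le hD.le (sq_nonneg (m * x))).comp
      pow_left_monotoneOn fun y _ => sq_nonneg y).const_add _
  obtain ⟨x, hx, hnorm, hmax⟩ :=
    exists_isGreatest_sphere_arcPoint_of_inner_eq_zero hpne hqne hpq hΦ hmono (f := F) fun w => by
      rw [hF, sum_mul_eq_inner_of_ofLp_eq_conj hh₁s, sum_mul_eq_inner_of_ofLp_eq_conj hh₂s, hm,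
        add_sub_cancel]
  refine ⟨x, hx, fun wopt hwopt => ?_⟩
  rw [RCLike.real_smul_eq_coe_smul (K := ℂ), RCLike.real_smul_eq_coe_smul (K := ℂ),
    RCLike.ofReal_inv, RCLike.ofReal_inv] at hwopt
  subst hwopt
  exact ⟨hnorm, hmax⟩

/-- Proposition 1: structure of the optimal energy-beamforming vector. The supremum of
`F(w) = A₀|h₁ᵀw|² + B₀|h₁ᵀw|²|h₂ᵀw|² / (C₀|h₁ᵀw|² + D₀|h₂ᵀw|² + 1)` over the unit sphere
is attained at a vector of the form
`w = x̄·Π_{h₁*}h₂*/‖Π_{h₁*}h₂*‖ + √(1−x̄²)·Π⊥_{h₁*}h₂*/‖Π⊥_{h₁*}h₂*‖` with `x̄ ∈ [0,1]`. -/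
theorem optimal_beamformer_structure (N : ℕ) (hN : 2 ≤ N)
    (h₁ h₂ : EuclideanSpace ℂ (Fin N))
    (A₀ B₀ C₀ D₀ : ℝ) (hA : 0 < A₀) (hB : 0 < B₀) (hC : 0 < C₀) (hD : 0 < D₀)
    (F : EuclideanSpace ℂ (Fin N) → ℝ)
    (hF : ∀ w, F w =
      A₀ * ‖∑ j, h₁ j * w j‖ ^ 2 +
        B₀ * ‖∑ j, h₁ j * w j‖ ^ 2 * ‖∑ j, h₂ j * w j‖ ^ 2 /
          (C₀ * ‖∑ j, h₁ j * w j‖ ^ 2 + D₀ * ‖∑ j, h₂ j * w j‖ ^ 2 + 1))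
    (h₁s h₂s : EuclideanSpace ℂ (Fin N))
    (hh₁s : h₁s = fun j => starRingEnd ℂ (h₁ j))
    (hh₂s : h₂s = fun j => starRingEnd ℂ (h₂ j))
    (p : EuclideanSpace ℂ (Fin N))
    (hp : p = (Submodule.orthogonalProjection (ℂ ∙ h₁s) h₂s : EuclideanSpace ℂ (Fin N)))
    (hpne : p ≠ 0) (hqne : h₂s - p ≠ 0) :
    ∃ x : ℝ, x ∈ Set.Icc (0:ℝ) 1 ∧
      ∀ wopt : EuclideanSpace ℂ (Fin N),
        wopt = (x : ℂ) • (‖p‖⁻¹ • p)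
          + ((Real.sqrt (1 - x ^ 2) : ℝ) : ℂ) • (‖h₂s - p‖⁻¹ • (h₂s - p)) →
        ‖wopt‖ = 1 ∧ IsGreatest (F '' {w | ‖w‖ = 1}) (F wopt) :=
  optimal_beamformer_structure_general N h₁ h₂ A₀ B₀ C₀ D₀ hB hC hD F hF h₁s h₂s hh₁s hh₂s p hp hpne
    hqne
end

section
/- Suppose A a² + D(b² − c²) = 0. Then: (i) if A a² + C a² ≤ D c², then x = 1 is a maximizer of γ on [0,1] and the maximum value is A a² + C a²; (ii) if D c² < A a² + C a² < 2(bc + c²)D, then x = c√D / √((a√C − b√D)² + D c²) is a maximizer of γ on [0,1] and the maximum value is D(A + C)a²c² / ((a√C − b√D)² + D c²); (iii) if A a² + C a² ≥ 2(bc + c²)D, then x = 1/√2 is a maximizer of γ on [0,1] and the maximum value is (bc + c²)D. -/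
/-!
Under `A a² + D(b² − c²) = 0` the `x²`-term of the second branch vanishes, so
`γ x = min (P x²) (Q x √(1 − x²) + R)` with `P = (A + C) a²`, `Q = 2Dbc`, `R = Dc²`.
The first branch increases on `[0, 1]`; the second is at most `Q/2 + R` (AM–GM on `x` and
`√(1 − x²)`) and decreases for `x ≥ 1/√2`, since `x √(1 − x²) = √(1/4 − (x² − 1/2)²)`.
So the maximizer is `1` when `P ≤ R`, `1/√2` when the first branch still dominates there, and
otherwise the crossing point of the branches, which lies in `[1/√2, 1]`. With `u = a√C`,
`v = b√D`, `w = c√D` one has `P = u² − v² + w²` and `Q = 2vw`, and the crossing point is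
`w / √((u − v)² + w²)`, at which `√(1 − x²) = (u − v) / √((u − v)² + w²)`.
-/
open Real Set

section MinOfMax

variable {α β : Type*} [LinearOrder β] {f g : α → β} {s : Set α} {a : α}

theorem isMaxOn_min_of_left (hf : IsMaxOn f s a) (hfg : f a ≤ g a) :
    IsMaxOn (fun x => min (f x) (g x)) s a := fun x hx => by
  simpa [min_eq_left hfg] using (min_le_left _ _).trans (hf hx)

theorem isMaxOn_min_of_right (hg : IsMaxOn g s a) (hgf : g a ≤ f a) :
    IsMaxOn (fun x => min (f x) (g x)) s a := fun x hx => by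
  simpa [min_eq_right hgf] using (min_le_right _ _).trans (hg hx)

theorem isMaxOn_min_of_crossing [LinearOrder α] (hf : IsMaxOn f (s ∩ Iic a) a)
    (hg : IsMaxOn g (s ∩ Ici a) a) (hfg : f a = g a) :
    IsMaxOn (fun x => min (f x) (g x)) s a := fun x hx => by
  rcases le_total x a with hxa | hax
  · exact (isMaxOn_min_of_left hf hfg.le) ⟨hx, hxa⟩
  · exact (isMaxOn_min_of_right hg hfg.ge) ⟨hx, hax⟩

end MinOfMax

theorem mul_sqrt_one_sub_sq_le_half (x : ℝ) : x * √(1 - x ^ 2) ≤ 1 / 2 := by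
  rcases le_total (1 - x ^ 2) 0 with h | h
  · rw [sqrt_eq_zero_of_nonpos h]; norm_num
  · nlinarith [sq_nonneg (x - √(1 - x ^ 2)), sq_sqrt h]

theorem mul_sqrt_one_sub_sq_eq_sqrt {x : ℝ} (hx : 0 ≤ x) :
    x * √(1 - x ^ 2) = √(1 / 4 - (x ^ 2 - 1 / 2) ^ 2) := by
  rw [← sqrt_sq hx, ← sqrt_mul (sq_nonneg x), sqrt_sq hx]
  ring_nf

theorem mul_sqrt_one_sub_sq_le_of_le {x y : ℝ} (hy : 0 ≤ y) (hy2 : 1 / 2 ≤ y ^ 2) (hyx : y ≤ x) :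
    x * √(1 - x ^ 2) ≤ y * √(1 - y ^ 2) := by
  rw [mul_sqrt_one_sub_sq_eq_sqrt hy, mul_sqrt_one_sub_sq_eq_sqrt (hy.trans hyx)]
  gcongr

theorem sq_div_sqrt_sq_add_sq (e w : ℝ) : (w / √(e ^ 2 + w ^ 2)) ^ 2 = w ^ 2 / (e ^ 2 + w ^ 2) := by
  rw [div_pow, sq_sqrt (by positivity)]

theorem sqrt_one_sub_sq_div_sqrt_sq_add_sq {e w : ℝ} (he : 0 ≤ e) (hw : w ≠ 0) :
    √(1 - (w / √(e ^ 2 + w ^ 2)) ^ 2) = e / √(e ^ 2 + w ^ 2) := by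
  have hS : 0 < e ^ 2 + w ^ 2 := by positivity
  rw [sq_div_sqrt_sq_add_sq, one_sub_div hS.ne', add_sub_cancel_right, sqrt_div' _ hS.le,
    sqrt_sq he]

noncomputable def reducedObjective (P Q R x : ℝ) : ℝ :=
  min (P * x ^ 2) (Q * x * √(1 - x ^ 2) + R)

namespace reducedObjective

variable {P Q R : ℝ}

theorem apply_one (P Q R : ℝ) : reducedObjective P Q R 1 = min P R := by
  simp [reducedObjective]

theorem apply_inv_sqrt_two (P Q R : ℝ) :
    reducedObjective P Q R (1 / √2) = min (P / 2) (Q / 2 + R) := by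
  have hsq : (1 / √2 : ℝ) ^ 2 = 1 / 2 := by rw [div_pow, sq_sqrt zero_le_two]; norm_num
  have hsqrt : √(1 - (1 / √2) ^ 2) = 1 / √2 := by
    rw [hsq, show (1 : ℝ) - 1 / 2 = 1 / 2 by norm_num, sqrt_div' _ zero_le_two, sqrt_one]
  rw [reducedObjective, hsqrt, mul_assoc, ← sq, hsq]
  ring_nf

theorem isMaxOn_one (hP : 0 ≤ P) (hPR : P ≤ R) :
    IsMaxOn (reducedObjective P Q R) (Icc 0 1) 1 := by
  refine isMaxOn_min_of_left (fun x ⟨hx0, hx1⟩ => ?_) (by simpa using hPR)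
  simpa using mul_le_of_le_one_right hP (pow_le_one₀ hx0 hx1)

theorem isMaxOn_inv_sqrt_two (hQ : 0 ≤ Q) (hQRP : Q + 2 * R ≤ P) :
    IsMaxOn (reducedObjective P Q R) univ (1 / √2) := by
  have hval := apply_inv_sqrt_two P Q R
  rw [min_eq_right (by linarith)] at hval
  intro x _
  have := mul_le_mul_of_nonneg_left (mul_sqrt_one_sub_sq_le_half x) hQ
  show reducedObjective P Q R x ≤ _
  rw [hval]
  refine (min_le_right _ _).trans ?_
  linarith

theorem isMaxOn_of_crossing {x₀ : ℝ} (hP : 0 ≤ P) (hQ : 0 ≤ Q) (hx₀ : 0 ≤ x₀)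
    (hx₀_sq : 1 / 2 ≤ x₀ ^ 2) (hcross : P * x₀ ^ 2 = Q * x₀ * √(1 - x₀ ^ 2) + R) :
    IsMaxOn (reducedObjective P Q R) (Ici 0) x₀ := by
  refine isMaxOn_min_of_crossing (fun x ⟨hx, hxx₀⟩ => ?_) (fun x ⟨_, hx₀x⟩ => ?_) hcross
  · exact mul_le_mul_of_nonneg_left (pow_le_pow_left₀ hx hxx₀ 2) hP
  · have := mul_le_mul_of_nonneg_left (mul_sqrt_one_sub_sq_le_of_le hx₀ hx₀_sq hx₀x) hQ
    show Q * x * _ + R ≤ Q * x₀ * _ + R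
    linarith

theorem isMaxOn_crossingPoint {u v w : ℝ} (hv : 0 ≤ v) (hvu : v ≤ u)
    (huvw : u - v ≤ w) (hw : 0 < w) :
    let P := u ^ 2 - v ^ 2 + w ^ 2
    let x₀ := w / √((u - v) ^ 2 + w ^ 2)
    x₀ ∈ Icc 0 1 ∧ IsMaxOn (reducedObjective P (2 * v * w) (w ^ 2)) (Icc 0 1) x₀ ∧
      reducedObjective P (2 * v * w) (w ^ 2) x₀ = P * w ^ 2 / ((u - v) ^ 2 + w ^ 2) := by
  intro P x₀
  have he : 0 ≤ u - v := sub_nonneg.2 hvu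
  have hS : 0 < (u - v) ^ 2 + w ^ 2 := by positivity
  have hx₀ : 0 ≤ x₀ := by positivity
  have hx₀_sq : x₀ ^ 2 = w ^ 2 / ((u - v) ^ 2 + w ^ 2) := sq_div_sqrt_sq_add_sq _ _
  have hcross : P * x₀ ^ 2 = 2 * v * w * x₀ * √(1 - x₀ ^ 2) + w ^ 2 := by
    rw [sqrt_one_sub_sq_div_sqrt_sq_add_sq he hw.ne', mul_assoc _ x₀, div_mul_div_comm,
      mul_self_sqrt hS.le, hx₀_sq]
    field_simp
    ring
  have hx₀_le : x₀ ^ 2 ≤ 1 := by rw [hx₀_sq, div_le_one hS]; nlinarith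
  have hhalf : 1 / 2 ≤ x₀ ^ 2 := by rw [hx₀_sq, le_div_iff₀ hS]; nlinarith
  refine ⟨⟨hx₀, (sq_le_one_iff₀ hx₀).1 hx₀_le⟩, ?_, ?_⟩
  · exact (isMaxOn_of_crossing (by nlinarith) (by positivity) hx₀ hhalf hcross).on_subset
      Icc_subset_Ici_self
  · rw [reducedObjective, ← hcross, min_self, hx₀_sq, mul_div_assoc]

theorem isMaxOn_beamformer {a b c A C D : ℝ} (ha : 0 < a) (hb : 0 < b)
    (hc : 0 < c) (hC : 0 < C) (hD : 0 < D) (hK : A * a ^ 2 + D * (b ^ 2 - c ^ 2) = 0)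
    (hlow : D * c ^ 2 < A * a ^ 2 + C * a ^ 2)
    (hup : A * a ^ 2 + C * a ^ 2 < 2 * (b * c + c ^ 2) * D) :
    let S := (a * √C - b * √D) ^ 2 + D * c ^ 2
    let x₀ := c * √D / √S
    x₀ ∈ Icc 0 1 ∧
      IsMaxOn (reducedObjective (A * a ^ 2 + C * a ^ 2) (2 * D * b * c) (D * c ^ 2)) (Icc 0 1) x₀ ∧
      reducedObjective (A * a ^ 2 + C * a ^ 2) (2 * D * b * c) (D * c ^ 2) x₀
        = D * (A + C) * a ^ 2 * c ^ 2 / S := by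
  intro S x₀
  have hu : (a * √C) ^ 2 = C * a ^ 2 := by rw [mul_pow, sq_sqrt hC.le, mul_comm]
  have hv : (b * √D) ^ 2 = D * b ^ 2 := by rw [mul_pow, sq_sqrt hD.le, mul_comm]
  have hw : (c * √D) ^ 2 = D * c ^ 2 := by rw [mul_pow, sq_sqrt hD.le, mul_comm]
  have hP : (a * √C) ^ 2 - (b * √D) ^ 2 + (c * √D) ^ 2 = A * a ^ 2 + C * a ^ 2 := by
    rw [hu, hv, hw]; linarith
  have hQ : 2 * (b * √D) * (c * √D) = 2 * D * b * c := by
    linear_combination 2 * b * c * sq_sqrt hD.le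
  have hvu : b * √D ≤ a * √C :=
    (sq_le_sq₀ (by positivity) (by positivity)).1 (by rw [hu, hv]; linarith)
  have huvw : a * √C - b * √D ≤ c * √D := by
    have : a * √C ≤ (b + c) * √D :=
      (sq_le_sq₀ (by positivity) (by positivity)).1
        (by rw [hu, mul_pow, sq_sqrt hD.le]; linarith)
    linarith
  obtain ⟨hmem, hmax, hval⟩ :=
    isMaxOn_crossingPoint (by positivity) hvu huvw (by positivity : 0 < c * √D)
  rw [hw] at hmem
  rw [hP, hQ, hw] at hmax hval
  refine ⟨hmem, hmax, ?_⟩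
  rw [hval]
  ring

end reducedObjective

/-- Theorem 1 (Scenario `A a² + D(b² − c²) = 0`) of the suboptimal energy-beamforming
problem `P5`: the maximizer of
`γ(x) = min ((A a² + C a²) x², (A a² + D(b² − c²)) x² + 2 D b c x √(1 − x²) + D c²)`
over `[0,1]` in the three cases. -/
theorem beamforming_scenario_zero (a b c A C D : ℝ)
    (ha : 0 < a) (hb : 0 < b) (hc : 0 < c) (hA : 0 < A) (hC : 0 < C) (hD : 0 < D)
    (hK : A * a ^ 2 + D * (b ^ 2 - c ^ 2) = 0) :
    (let γ : ℝ → ℝ := fun x =>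
      min ((A * a ^ 2 + C * a ^ 2) * x ^ 2)
        ((A * a ^ 2 + D * (b ^ 2 - c ^ 2)) * x ^ 2
          + 2 * D * b * c * x * Real.sqrt (1 - x ^ 2) + D * c ^ 2);
    (A * a ^ 2 + C * a ^ 2 ≤ D * c ^ 2 →
      (1 : ℝ) ∈ Set.Icc (0:ℝ) 1 ∧ IsMaxOn γ (Set.Icc (0:ℝ) 1) 1 ∧
      γ 1 = A * a ^ 2 + C * a ^ 2) ∧
    (D * c ^ 2 < A * a ^ 2 + C * a ^ 2 ∧ A * a ^ 2 + C * a ^ 2 < 2 * (b * c + c ^ 2) * D →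
      c * Real.sqrt D / Real.sqrt ((a * Real.sqrt C - b * Real.sqrt D) ^ 2 + D * c ^ 2)
        ∈ Set.Icc (0:ℝ) 1 ∧
      IsMaxOn γ (Set.Icc (0:ℝ) 1)
        (c * Real.sqrt D / Real.sqrt ((a * Real.sqrt C - b * Real.sqrt D) ^ 2 + D * c ^ 2)) ∧
      γ (c * Real.sqrt D / Real.sqrt ((a * Real.sqrt C - b * Real.sqrt D) ^ 2 + D * c ^ 2))
        = D * (A + C) * a ^ 2 * c ^ 2
            / ((a * Real.sqrt C - b * Real.sqrt D) ^ 2 + D * c ^ 2)) ∧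
    (2 * (b * c + c ^ 2) * D ≤ A * a ^ 2 + C * a ^ 2 →
      (1 / Real.sqrt 2 : ℝ) ∈ Set.Icc (0:ℝ) 1 ∧
      IsMaxOn γ (Set.Icc (0:ℝ) 1) (1 / Real.sqrt 2) ∧
      γ (1 / Real.sqrt 2) = (b * c + c ^ 2) * D)) := by
  intro γ
  have hγ : γ = reducedObjective (A * a ^ 2 + C * a ^ 2) (2 * D * b * c) (D * c ^ 2) := by
    funext x
    simp only [γ, hK, zero_mul, zero_add]
    rfl
  have hP : 0 ≤ A * a ^ 2 + C * a ^ 2 := by positivity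
  rw [hγ]
  refine ⟨fun h => ?_, fun ⟨hlow, hup⟩ => ?_, fun h => ?_⟩
  · refine ⟨right_mem_Icc.2 zero_le_one, reducedObjective.isMaxOn_one hP h, ?_⟩
    rw [reducedObjective.apply_one, min_eq_left h]
  · exact reducedObjective.isMaxOn_beamformer ha hb hc hC hD hK hlow hup
  · refine ⟨⟨by positivity, ?_⟩, ?_, ?_⟩
    · rw [div_le_one (by positivity)]
      exact one_le_sqrt.2 one_le_two
    · exact (reducedObjective.isMaxOn_inv_sqrt_two (by positivity) (by linarith)).on_subset
        (subset_univ _)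
    · rw [reducedObjective.apply_inv_sqrt_two, min_eq_right (by linarith)]
      ring
end

section
/- Suppose K := A a² + D(b² − c²) > 0 and set k = K/(2Dbc), x̂ = √(1/2 + k²/(2√(k² + k⁴))), and T(k) = (Dbc(k + √(1/(1+k²)) + k³/√(k² + k⁴)) + D c²) / (1/2 + k²/(2√(k² + k⁴))). Then: (i) if A a² + C a² ≤ 2Dbck + D c², then x = 1 is a maximizer of γ on [0,1] and the maximum value is A a² + C a²; (ii) if 2Dbck + D c² < A a² + C a² < T(k), then x = c√D / √((a√C − b√D)² + D c²) is a maximizer of γ on [0,1] and the maximum value is D(A + C)a²c² / ((a√C − b√D)² + D c²); (iii) if A a² + C a² ≥ T(k), then x = x̂ is a maximizer of γ on [0,1] and the maximum value is Dbc(k + √(1/(1+k²)) + k³/√(k² + k⁴)) + D c². -/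
/-!
Write `x = sin θ`. The second branch of `γ` is `D b c (k + k (-cos 2θ) + sin 2θ) + D c²`, a
linear functional `(p, q) ↦ k p + q` on the unit circle plus constants. So it is bounded by its
value `D b c (k + √(1 + k²)) + D c²` at `x̂` and decreases beyond `x̂`, while the first branch
`(A + C) a² x²` increases. Hence the maximum of the minimum is at `x = 1` if the first branch is
still the smaller one there, at `x̂` if the first branch is the larger one at `x̂`, and otherwise at
the crossing of the two branches, which then lies beyond `x̂`. Putting `x = t / √(E² + t²)` with
`t = c √D`, `E = a √C - b √D` solves the crossing equation.
-/

open Real Set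

section MinMax

variable {α β : Type*} [LinearOrder β] {f g : α → β} {s : Set α} {a : α}

theorem isMaxOn_min_of_le (hf : IsMaxOn f s a) (h : f a ≤ g a) :
    IsMaxOn (fun x => min (f x) (g x)) s a :=
  isMaxOn_iff.2 fun x hx => by
    rw [min_eq_left h]
    exact (min_le_left _ _).trans (hf hx)

theorem isMaxOn_min_of_ge (hg : IsMaxOn g s a) (h : g a ≤ f a) :
    IsMaxOn (fun x => min (f x) (g x)) s a :=
  isMaxOn_iff.2 fun x hx => by
    rw [min_eq_right h]
    exact (min_le_right _ _).trans (hg hx)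

theorem isMaxOn_min_of_eq [LinearOrder α] (hfg : f a = g a)
    (hf : ∀ x ∈ s, x ≤ a → f x ≤ f a) (hg : ∀ x ∈ s, a ≤ x → g x ≤ g a) :
    IsMaxOn (fun x => min (f x) (g x)) s a :=
  isMaxOn_iff.2 fun x hx => by
    rw [← hfg, min_self]
    rcases le_total x a with h | h
    · exact (min_le_left _ _).trans (hf x hx h)
    · exact (min_le_right _ _).trans ((hg x hx h).trans hfg.ge)

end MinMax

theorem abs_lt_sqrt_one_add_sq (k : ℝ) : |k| < √(1 + k ^ 2) :=
  (lt_sqrt (abs_nonneg k)).2 (by rw [sq_abs]; linarith)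

theorem mul_add_le_sqrt_one_add_sq {k p q : ℝ} (h : p ^ 2 + q ^ 2 = 1) :
    k * p + q ≤ √(1 + k ^ 2) :=
  (le_abs_self _).trans <| abs_le_sqrt <| by nlinarith [sq_nonneg (k * q - p)]

/-- `k q ≤ p` places `(p, q)` past the maximiser `(k, 1) / √(1 + k²)` of `k p + q` on the circle. -/
theorem mul_add_le_mul_add_of_sq_add_sq_eq_one {k p₁ q₁ p₂ q₂ : ℝ}
    (h₁ : p₁ ^ 2 + q₁ ^ 2 = 1) (h₂ : p₂ ^ 2 + q₂ ^ 2 = 1) (hq₁ : 0 ≤ q₁)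
    (hk : k * q₁ ≤ p₁) (hp : p₁ ≤ p₂) : k * p₂ + q₂ ≤ k * p₁ + q₁ := by
  rcases hq₁.eq_or_lt with rfl | hq₁
  · have hp₁ : p₁ = 1 := by nlinarith
    have hp₂ : p₂ = 1 := by nlinarith
    have hq₂ : q₂ = 0 := by subst hp₂; nlinarith
    subst hp₁ hp₂ hq₂; rfl
  · have hcs : p₁ * p₂ + q₁ * q₂ ≤ 1 := by nlinarith [sq_nonneg (p₁ - p₂), sq_nonneg (q₁ - q₂)]
    nlinarith [mul_le_mul_of_nonneg_right hk (sub_nonneg.2 hp)]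

theorem two_mul_sq_sub_one_sq_add_sq {x : ℝ} (hx : x ^ 2 ≤ 1) :
    (2 * x ^ 2 - 1) ^ 2 + (2 * x * √(1 - x ^ 2)) ^ 2 = 1 := by
  rw [mul_pow, sq_sqrt (by linarith)]; ring

theorem div_sqrt_sq_add_sq_mem_Icc {t E : ℝ} (ht : 0 ≤ t) : t / √(E ^ 2 + t ^ 2) ∈ Icc 0 1 := by
  refine ⟨by positivity, div_le_one_of_le₀ ?_ (sqrt_nonneg _)⟩
  calc t = √(t ^ 2) := (sqrt_sq ht).symm
    _ ≤ √(E ^ 2 + t ^ 2) := sqrt_le_sqrt (by nlinarith)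

theorem div_sqrt_sq_add_sq_sq (t E : ℝ) : (t / √(E ^ 2 + t ^ 2)) ^ 2 = t ^ 2 / (E ^ 2 + t ^ 2) := by
  rw [div_pow, sq_sqrt (by positivity)]

theorem sqrt_one_sub_div_sqrt_sq_add_sq_sq {t E : ℝ} (hE : 0 ≤ E) (h : 0 < E ^ 2 + t ^ 2) :
    √(1 - (t / √(E ^ 2 + t ^ 2)) ^ 2) = E / √(E ^ 2 + t ^ 2) := by
  rw [div_sqrt_sq_add_sq_sq, show 1 - t ^ 2 / (E ^ 2 + t ^ 2) = E ^ 2 / (E ^ 2 + t ^ 2) by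
    field_simp; ring, sqrt_div' _ h.le, sqrt_sq hE]

theorem sqrt_sq_add_pow_four {k : ℝ} (hk : 0 ≤ k) : √(k ^ 2 + k ^ 4) = k * √(1 + k ^ 2) := by
  rw [show k ^ 2 + k ^ 4 = k ^ 2 * (1 + k ^ 2) by ring, sqrt_mul (sq_nonneg k), sqrt_sq hk]

theorem half_add_sq_div_sqrt {k : ℝ} (hk : 0 < k) :
    1 / 2 + k ^ 2 / (2 * √(k ^ 2 + k ^ 4)) = 1 / 2 + k / (2 * √(1 + k ^ 2)) := by
  rw [sqrt_sq_add_pow_four hk.le]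
  field_simp

theorem add_sqrt_one_div_add_pow_three_div {k : ℝ} (hk : 0 < k) :
    k + √(1 / (1 + k ^ 2)) + k ^ 3 / √(k ^ 2 + k ^ 4) = k + √(1 + k ^ 2) := by
  have hr : √(1 + k ^ 2) ^ 2 = 1 + k ^ 2 := sq_sqrt (by positivity)
  rw [sqrt_sq_add_pow_four hk.le, sqrt_div' _ (by positivity), sqrt_one]
  field_simp
  linear_combination -hr

theorem half_add_div_sqrt_mem_Icc (k : ℝ) : 1 / 2 + k / (2 * √(1 + k ^ 2)) ∈ Icc 0 1 := by
  have hkr := abs_lt_sqrt_one_add_sq k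
  have hr0 : 0 < 2 * √(1 + k ^ 2) := by positivity
  rw [div_add_div _ _ two_ne_zero hr0.ne', mem_Icc, le_div_iff₀ (by positivity),
    div_le_one (by positivity)]
  constructor <;> nlinarith [le_abs_self k, neg_abs_le k]

namespace Beamforming

noncomputable def gain (k x : ℝ) : ℝ := 2 * k * x ^ 2 + 2 * x * √(1 - x ^ 2)

theorem gain_eq (k x : ℝ) : gain k x = k + (k * (2 * x ^ 2 - 1) + 2 * x * √(1 - x ^ 2)) := by
  rw [gain]; ring

theorem gain_le (k : ℝ) {x : ℝ} (hx : x ^ 2 ≤ 1) : gain k x ≤ k + √(1 + k ^ 2) := by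
  rw [gain_eq]
  exact add_le_add_right (mul_add_le_sqrt_one_add_sq (two_mul_sq_sub_one_sq_add_sq hx)) k

theorem gain_sqrt (k : ℝ) : gain k √(1 / 2 + k / (2 * √(1 + k ^ 2))) = k + √(1 + k ^ 2) := by
  set r := √(1 + k ^ 2)
  have hr : r ^ 2 = 1 + k ^ 2 := sq_sqrt (by positivity)
  have hkr := abs_lt_sqrt_one_add_sq k
  have hr0 : 0 < r := (abs_nonneg k).trans_lt hkr
  have hx0 : 0 ≤ 1 / 2 + k / (2 * r) := (half_add_div_sqrt_mem_Icc k).1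
  have hprod : (1 / 2 + k / (2 * r)) * (1 - (1 / 2 + k / (2 * r))) = (1 / (2 * r)) ^ 2 := by
    field_simp; linear_combination hr
  rw [gain, sq_sqrt hx0, mul_assoc 2 (√_), ← sqrt_mul hx0, hprod, sqrt_sq (by positivity)]
  field_simp
  linear_combination -hr

theorem gain_le_gain {k u v : ℝ} (hv : 0 ≤ v) (hvu : v ≤ u) (hu : u ≤ 1)
    (hslope : k * (2 * v * √(1 - v ^ 2)) ≤ 2 * v ^ 2 - 1) : gain k u ≤ gain k v := by
  have hu2 : u ^ 2 ≤ 1 := pow_le_one₀ (hv.trans hvu) hu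
  have hv2 : v ^ 2 ≤ 1 := pow_le_one₀ hv (hvu.trans hu)
  rw [gain_eq, gain_eq]
  gcongr k + ?_
  exact mul_add_le_mul_add_of_sq_add_sq_eq_one (two_mul_sq_sub_one_sq_add_sq hv2)
    (two_mul_sq_sub_one_sq_add_sq hu2)
    (by positivity) hslope (by nlinarith)

noncomputable def objective (S B k M x : ℝ) : ℝ := min (S * x ^ 2) (B * gain k x + M)

variable {S B k M : ℝ}

theorem isMaxOn_objective_one (hS : 0 ≤ S) (h : S ≤ 2 * B * k + M) :
    (1 : ℝ) ∈ Icc 0 1 ∧ IsMaxOn (objective S B k M) (Icc 0 1) 1 ∧ objective S B k M 1 = S := by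
  have hg : S * 1 ^ 2 ≤ B * gain k 1 + M := by simpa [gain, mul_assoc, mul_comm B] using h
  refine ⟨right_mem_Icc.2 zero_le_one, isMaxOn_min_of_le (isMaxOn_iff.2 fun x hx => ?_) hg,
    by simpa [objective] using hg⟩
  simpa using mul_le_of_le_one_right hS (pow_le_one₀ hx.1 hx.2)

theorem isMaxOn_objective_sqrt (hB : 0 ≤ B)
    (h : B * (k + √(1 + k ^ 2)) + M ≤ S * (1 / 2 + k / (2 * √(1 + k ^ 2)))) :
    √(1 / 2 + k / (2 * √(1 + k ^ 2))) ∈ Icc 0 1 ∧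
      IsMaxOn (objective S B k M) (Icc 0 1) √(1 / 2 + k / (2 * √(1 + k ^ 2))) ∧
      objective S B k M √(1 / 2 + k / (2 * √(1 + k ^ 2))) = B * (k + √(1 + k ^ 2)) + M := by
  obtain ⟨hx0, hx1⟩ := half_add_div_sqrt_mem_Icc k
  have hg : B * gain k √(1 / 2 + k / (2 * √(1 + k ^ 2))) + M
      ≤ S * √(1 / 2 + k / (2 * √(1 + k ^ 2))) ^ 2 := by
    rwa [gain_sqrt, sq_sqrt hx0]
  refine ⟨⟨sqrt_nonneg _, sqrt_le_one.2 hx1⟩, isMaxOn_min_of_ge (isMaxOn_iff.2 fun x hx => ?_) hg,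
    by rw [objective, min_eq_right hg, gain_sqrt]⟩
  rw [gain_sqrt]
  gcongr
  exact gain_le k (pow_le_one₀ hx.1 hx.2)

/-- In the application `β = b √D`, `t = c √D` and `E = a √C - b √D`, so that the three parameters
of `objective` are `(A + C) a²`, `D b c` and `D c²`. -/
theorem isMaxOn_objective_crossing {β t E : ℝ} (hk : 0 ≤ k) (hβ : 0 ≤ β) (ht : 0 < t)
    (hE : 0 ≤ E)
    (h : (2 * β * t * k + t ^ 2 + E ^ 2 + 2 * β * E) * (1 / 2 + k / (2 * √(1 + k ^ 2)))
      < β * t * (k + √(1 + k ^ 2)) + t ^ 2) :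
    t / √(E ^ 2 + t ^ 2) ∈ Icc 0 1 ∧
      IsMaxOn (objective (2 * β * t * k + t ^ 2 + E ^ 2 + 2 * β * E) (β * t) k (t ^ 2)) (Icc 0 1)
        (t / √(E ^ 2 + t ^ 2)) ∧
      objective (2 * β * t * k + t ^ 2 + E ^ 2 + 2 * β * E) (β * t) k (t ^ 2) (t / √(E ^ 2 + t ^ 2))
        = (2 * β * t * k + t ^ 2 + E ^ 2 + 2 * β * E) * t ^ 2 / (E ^ 2 + t ^ 2) := by
  set S := 2 * β * t * k + t ^ 2 + E ^ 2 + 2 * β * E with hS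
  set r := √(1 + k ^ 2)
  have hr : r ^ 2 = 1 + k ^ 2 := sq_sqrt (by positivity)
  have hkr : k < r := (le_abs_self k).trans_lt (abs_lt_sqrt_one_add_sq k)
  have hr0 : 0 < r := hk.trans_lt hkr
  have hden : 0 < E ^ 2 + t ^ 2 := by positivity
  have hEt : E < (r - k) * t := by
    -- `h` compares the two branches at `x̂`; they cross there exactly when `E = (r - k) t`.
    have hfactor : (S * (1 / 2 + k / (2 * r)) - (β * t * (k + r) + t ^ 2)) * (2 * r)
        = (r + k) * (E - (r - k) * t) * (E + (r - k) * t + 2 * β) := by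
      field_simp
      linear_combination t ^ 2 * (r - k) * hr
    by_contra! H
    have : 0 ≤ (r + k) * (E - (r - k) * t) * (E + (r - k) * t + 2 * β) := by
      apply mul_nonneg (mul_nonneg _ _) _ <;> nlinarith
    nlinarith
  set x := t / √(E ^ 2 + t ^ 2)
  have hx := div_sqrt_sq_add_sq_mem_Icc (E := E) ht.le
  have hx2 : x ^ 2 = t ^ 2 / (E ^ 2 + t ^ 2) := div_sqrt_sq_add_sq_sq t E
  have hxq : x * √(1 - x ^ 2) = t * E / (E ^ 2 + t ^ 2) := by
    rw [sqrt_one_sub_div_sqrt_sq_add_sq_sq hE hden, div_mul_div_comm, ← pow_two,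
      sq_sqrt hden.le]
  have hcross : S * x ^ 2 = β * t * gain k x + t ^ 2 := by
    rw [gain, mul_assoc 2 x, hxq, hx2, hS]
    field_simp
    ring
  have hslope : k * (2 * x * √(1 - x ^ 2)) ≤ 2 * x ^ 2 - 1 := by
    have hnum : 0 ≤ ((r - k) * t - E) * ((r + k) * t + E) := by
      apply mul_nonneg <;> nlinarith
    rw [mul_assoc 2 x, hxq, hx2, ← sub_nonneg,
      show 2 * (t ^ 2 / (E ^ 2 + t ^ 2)) - 1 - k * (2 * (t * E / (E ^ 2 + t ^ 2)))
        = ((r - k) * t - E) * ((r + k) * t + E) / (E ^ 2 + t ^ 2) by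
        field_simp; linear_combination -(t ^ 2) * hr]
    exact div_nonneg hnum hden.le
  refine ⟨hx, isMaxOn_min_of_eq hcross (fun u hu hux => ?_) (fun u hu hxu => ?_), ?_⟩
  · have : 0 ≤ S := by positivity
    gcongr
    exact hu.1
  · gcongr
    exact gain_le_gain hx.1 hxu hu.2 hslope
  · rw [objective, ← hcross, min_self, hx2, mul_div_assoc]

theorem isMaxOn_objective_crossing_of_lt {a b c A C D : ℝ} (ha : 0 < a) (hb : 0 < b)
    (hc : 0 < c) (hC : 0 < C) (hD : 0 < D) (hk : 0 ≤ k)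
    (hKk : A * a ^ 2 + D * (b ^ 2 - c ^ 2) = 2 * D * b * c * k)
    (h₁ : 2 * D * b * c * k + D * c ^ 2 < A * a ^ 2 + C * a ^ 2)
    (h₂ : (A * a ^ 2 + C * a ^ 2) * (1 / 2 + k / (2 * √(1 + k ^ 2)))
      < D * b * c * (k + √(1 + k ^ 2)) + D * c ^ 2) :
    c * √D / √((a * √C - b * √D) ^ 2 + D * c ^ 2) ∈ Icc 0 1 ∧
      IsMaxOn (objective (A * a ^ 2 + C * a ^ 2) (D * b * c) k (D * c ^ 2)) (Icc 0 1)
        (c * √D / √((a * √C - b * √D) ^ 2 + D * c ^ 2)) ∧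
      objective (A * a ^ 2 + C * a ^ 2) (D * b * c) k (D * c ^ 2)
          (c * √D / √((a * √C - b * √D) ^ 2 + D * c ^ 2))
        = D * (A + C) * a ^ 2 * c ^ 2 / ((a * √C - b * √D) ^ 2 + D * c ^ 2) := by
  have hsC : √C ^ 2 = C := sq_sqrt hC.le
  have hsD : √D ^ 2 = D := sq_sqrt hD.le
  have hE : 0 < a * √C - b * √D := by
    have : b * √D < a * √C := lt_of_pow_lt_pow_left₀ 2 (by positivity) (by
      rw [mul_pow, mul_pow, hsC, hsD]; linarith)
    linarith
  have hS : A * a ^ 2 + C * a ^ 2 = 2 * (b * √D) * (c * √D) * k + (c * √D) ^ 2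
      + (a * √C - b * √D) ^ 2 + 2 * (b * √D) * (a * √C - b * √D) := by
    linear_combination hKk - (2 * b * c * k + c ^ 2 - b ^ 2) * hsD - a ^ 2 * hsC
  have hB : D * b * c = b * √D * (c * √D) := by linear_combination -(b * c) * hsD
  have hM : D * c ^ 2 = (c * √D) ^ 2 := by linear_combination -(c ^ 2) * hsD
  have hvalue : D * (A + C) * a ^ 2 * c ^ 2 = (A * a ^ 2 + C * a ^ 2) * (c * √D) ^ 2 := by
    linear_combination -((A + C) * a ^ 2 * c ^ 2) * hsD
  rw [hvalue, hM, hB, hS]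
  rw [hM, hB, hS] at h₂
  exact isMaxOn_objective_crossing hk (by positivity) (by positivity) hE.le h₂

end Beamforming

open Beamforming

/-- Theorem 2 (Scenario `K = A a² + D(b² − c²) > 0`) of the suboptimal energy-beamforming
problem `P5`: the maximizer of
`γ(x) = min ((A a² + C a²) x², (A a² + D(b² − c²)) x² + 2 D b c x √(1 − x²) + D c²)`
over `[0,1]` in the three cases, with `k = K/(2Dbc)`,
`x̂ = √(1/2 + k²/(2√(k² + k⁴)))` and threshold `T(k)`. -/
theorem beamforming_scenario_pos (a b c A C D : ℝ)
    (ha : 0 < a) (hb : 0 < b) (hc : 0 < c) (hA : 0 < A) (hC : 0 < C) (hD : 0 < D)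
    (hK : 0 < A * a ^ 2 + D * (b ^ 2 - c ^ 2)) :
    (let γ : ℝ → ℝ := fun x =>
      min ((A * a ^ 2 + C * a ^ 2) * x ^ 2)
        ((A * a ^ 2 + D * (b ^ 2 - c ^ 2)) * x ^ 2
          + 2 * D * b * c * x * Real.sqrt (1 - x ^ 2) + D * c ^ 2);
    let k : ℝ := (A * a ^ 2 + D * (b ^ 2 - c ^ 2)) / (2 * D * b * c);
    let xhat : ℝ := Real.sqrt (1 / 2 + k ^ 2 / (2 * Real.sqrt (k ^ 2 + k ^ 4)));
    let T : ℝ := (D * b * c * (k + Real.sqrt (1 / (1 + k ^ 2))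
        + k ^ 3 / Real.sqrt (k ^ 2 + k ^ 4)) + D * c ^ 2)
      / (1 / 2 + k ^ 2 / (2 * Real.sqrt (k ^ 2 + k ^ 4)));
    (A * a ^ 2 + C * a ^ 2 ≤ 2 * D * b * c * k + D * c ^ 2 →
      (1 : ℝ) ∈ Set.Icc (0:ℝ) 1 ∧ IsMaxOn γ (Set.Icc (0:ℝ) 1) 1 ∧
      γ 1 = A * a ^ 2 + C * a ^ 2) ∧
    (2 * D * b * c * k + D * c ^ 2 < A * a ^ 2 + C * a ^ 2 ∧ A * a ^ 2 + C * a ^ 2 < T →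
      c * Real.sqrt D / Real.sqrt ((a * Real.sqrt C - b * Real.sqrt D) ^ 2 + D * c ^ 2)
        ∈ Set.Icc (0:ℝ) 1 ∧
      IsMaxOn γ (Set.Icc (0:ℝ) 1)
        (c * Real.sqrt D / Real.sqrt ((a * Real.sqrt C - b * Real.sqrt D) ^ 2 + D * c ^ 2)) ∧
      γ (c * Real.sqrt D / Real.sqrt ((a * Real.sqrt C - b * Real.sqrt D) ^ 2 + D * c ^ 2))
        = D * (A + C) * a ^ 2 * c ^ 2
            / ((a * Real.sqrt C - b * Real.sqrt D) ^ 2 + D * c ^ 2)) ∧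
    (T ≤ A * a ^ 2 + C * a ^ 2 →
      xhat ∈ Set.Icc (0:ℝ) 1 ∧ IsMaxOn γ (Set.Icc (0:ℝ) 1) xhat ∧
      γ xhat = D * b * c * (k + Real.sqrt (1 / (1 + k ^ 2))
        + k ^ 3 / Real.sqrt (k ^ 2 + k ^ 4)) + D * c ^ 2)) := by
  intro γ k xhat T
  have hk : 0 < k := div_pos hK (by positivity)
  have hKk : A * a ^ 2 + D * (b ^ 2 - c ^ 2) = 2 * D * b * c * k := by
    simp only [k]; field_simp
  have hγ : γ = objective (A * a ^ 2 + C * a ^ 2) (D * b * c) k (D * c ^ 2) := by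
    funext x; simp only [γ, objective, gain, hKk]; ring_nf
  have hxhat : xhat = √(1 / 2 + k / (2 * √(1 + k ^ 2))) := by
    simp only [xhat, half_add_sq_div_sqrt hk]
  have hT : T = (D * b * c * (k + √(1 + k ^ 2)) + D * c ^ 2)
      / (1 / 2 + k / (2 * √(1 + k ^ 2))) := by
    simp only [T, half_add_sq_div_sqrt hk, add_sqrt_one_div_add_pow_three_div hk]
  have hx2 : 0 < 1 / 2 + k / (2 * √(1 + k ^ 2)) := by positivity
  rw [hγ, hxhat, hT, add_sqrt_one_div_add_pow_three_div hk]
  exact ⟨fun h => isMaxOn_objective_one (by positivity) (by linarith),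
    fun ⟨h₁, h₂⟩ => isMaxOn_objective_crossing_of_lt ha hb hc hC hD hk.le hKk h₁
      ((lt_div_iff₀ hx2).1 h₂),
    fun h => isMaxOn_objective_sqrt (by positivity) ((div_le_iff₀ hx2).1 h)⟩
end

section
/- Let α, β, δ be positive real numbers and for x ∈ [0,1] define γ(x) = min{(α + β)x², (α − δ)x² + δ}. Then: (i) if α ≥ δ, the point x = 1 is a maximizer of γ on [0,1] and the maximum value is α; (ii) if α < δ, the point x = √(δ/(β + δ)) is a maximizer of γ on [0,1] and the maximum value is (α + β)δ/(β + δ). -/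
/-- Asymptotic large-`N` energy-beamforming problem `P8`:
maximization of `γ(x) = min ((α+β)x², (α−δ)x² + δ)` over `x ∈ [0,1]`. -/
theorem largeN_beamforming_opt (α β δ : ℝ) (hα : 0 < α) (hβ : 0 < β) (hδ : 0 < δ) :
    (let γ : ℝ → ℝ := fun x => min ((α + β) * x ^ 2) ((α - δ) * x ^ 2 + δ);
    (δ ≤ α → (1 : ℝ) ∈ Set.Icc (0:ℝ) 1 ∧ IsMaxOn γ (Set.Icc (0:ℝ) 1) 1 ∧ γ 1 = α) ∧
    (α < δ → Real.sqrt (δ / (β + δ)) ∈ Set.Icc (0:ℝ) 1 ∧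
      IsMaxOn γ (Set.Icc (0:ℝ) 1) (Real.sqrt (δ / (β + δ))) ∧
      γ (Real.sqrt (δ / (β + δ))) = (α + β) * δ / (β + δ))) := by
  intro γ
  have hbd : 0 < β + δ := by linarith
  constructor
  · intro h
    have hγ1 : γ 1 = α := by
      simp only [γ, one_pow, mul_one]
      rw [min_eq_right (by linarith)]
      ring
    refine ⟨by norm_num, ?_, hγ1⟩
    intro x hx
    simp only [Set.mem_Icc] at hx
    have hx2 : x ^ 2 ≤ 1 := by nlinarith [hx.1, hx.2]
    simp only [Set.mem_setOf_eq, hγ1]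
    calc γ x ≤ (α - δ) * x ^ 2 + δ := min_le_right _ _
      _ ≤ α := by nlinarith
  · intro h
    have hs : Real.sqrt (δ / (β + δ)) ^ 2 = δ / (β + δ) :=
      Real.sq_sqrt (by positivity)
    have hle1 : Real.sqrt (δ / (β + δ)) ≤ 1 := by
      rw [show (1:ℝ) = Real.sqrt 1 by simp]
      exact Real.sqrt_le_sqrt (by rw [div_le_one hbd]; linarith)
    have hγs : γ (Real.sqrt (δ / (β + δ))) = (α + β) * δ / (β + δ) := by
      simp only [γ, hs]
      rw [min_eq_left (le_of_eq (by field_simp; ring))]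
      ring
    refine ⟨⟨Real.sqrt_nonneg _, hle1⟩, ?_, hγs⟩
    intro x hx
    simp only [Set.mem_Icc] at hx
    simp only [Set.mem_setOf_eq, hγs]
    rcases le_or_gt (x ^ 2) (δ / (β + δ)) with hc | hc
    · calc γ x ≤ (α + β) * x ^ 2 := min_le_left _ _
        _ ≤ (α + β) * δ / (β + δ) := by
          rw [mul_div_assoc]
          exact mul_le_mul_of_nonneg_left hc (by linarith)
    · calc γ x ≤ (α - δ) * x ^ 2 + δ := min_le_right _ _
        _ ≤ (α + β) * δ / (β + δ) := by
          rw [div_lt_iff₀ hbd] at hc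
          rw [le_div_iff₀ hbd]
          nlinarith
end

section
/- Let κ > 0 and define g(τ) = ((1−τ)/2) · log(1 + κτ/(1−τ)) for τ ∈ [0,1). Then g is strictly concave on [0,1), g attains its maximum over [0,1) at a unique point τ* ∈ (0,1), and τ* is the unique solution in (0,1) of the first-order condition log(1 + κτ/(1−τ)) = κ/(1 + (κ−1)τ). -/
/-!
On `[0,1)` the derivative of `g` is `φ(τ) = (κ/(1+(κ-1)τ) - log(1 + κτ/(1-τ)))/2`, and
`φ'(τ) = -κ²/(2(1-τ)(1+(κ-1)τ)²) < 0`. Hence `g` is strictly concave and `φ` has at most one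
zero; one exists because `φ(0) = κ/2 > 0` while `φ(τ) → -∞` as `τ → 1`. The zero of `φ` is exactly
the first-order condition, and a critical point of a concave function is a global maximum.
-/

open Real Set

theorem ConcaveOn.isMaxOn_of_hasDerivAt_eq_zero {S : Set ℝ} {f : ℝ → ℝ} {x : ℝ}
    (hf : ConcaveOn ℝ S f) (hx : x ∈ interior S) (hd : HasDerivAt f 0 x) : IsMaxOn f S x := by
  have hd' : derivWithin (-f) (Ioi x) x = 0 := by
    simpa using hd.neg.hasDerivWithinAt.derivWithin (uniqueDiffWithinAt_Ioi x)
  simpa using (hf.neg.isMinOn_of_rightDeriv_eq_zero hx hd').neg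

noncomputable def throughput (κ τ : ℝ) : ℝ := (1 - τ) / 2 * log (1 + κ * τ / (1 - τ))

noncomputable def throughputDeriv (κ τ : ℝ) : ℝ :=
  (κ / (1 + (κ - 1) * τ) - log (1 + κ * τ / (1 - τ))) / 2

section

variable {κ x : ℝ}

theorem one_add_mul_div_one_sub (hx : x ≠ 1) :
    1 + κ * x / (1 - x) = (1 + (κ - 1) * x) / (1 - x) := by
  have : 1 - x ≠ 0 := sub_ne_zero.mpr hx.symm
  field_simp
  ring

theorem hasDerivAt_log_one_add_mul_div_one_sub (hx : x ≠ 1) (hw : 1 + (κ - 1) * x ≠ 0) :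
    HasDerivAt (fun τ => log (1 + κ * τ / (1 - τ))) (κ / ((1 + (κ - 1) * x) * (1 - x))) x := by
  have hx' : 1 - x ≠ 0 := sub_ne_zero.mpr hx.symm
  have hinner : HasDerivAt (fun τ => 1 + κ * τ / (1 - τ)) (κ / (1 - x) ^ 2) x := by
    refine ((((hasDerivAt_id' x).const_mul κ).div ((hasDerivAt_id' x).const_sub 1) hx').const_add 1
      ).congr_deriv ?_
    field_simp
    ring
  have hne : 1 + κ * x / (1 - x) ≠ 0 := by
    rw [one_add_mul_div_one_sub hx]
    exact div_ne_zero hw hx'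
  convert hinner.log hne using 1
  rw [one_add_mul_div_one_sub hx]
  field_simp

theorem hasDerivAt_throughput (hx : x ≠ 1) (hw : 1 + (κ - 1) * x ≠ 0) :
    HasDerivAt (throughput κ) (throughputDeriv κ x) x := by
  refine ((((hasDerivAt_id' x).const_sub 1).div_const 2).mul
    (hasDerivAt_log_one_add_mul_div_one_sub hx hw) : HasDerivAt (throughput κ) _ x).congr_deriv ?_
  rw [throughputDeriv]
  field_simp
  ring

theorem hasDerivAt_throughputDeriv (hx : x ≠ 1) (hw : 1 + (κ - 1) * x ≠ 0) :
    HasDerivAt (throughputDeriv κ) (-κ ^ 2 / (2 * (1 - x) * (1 + (κ - 1) * x) ^ 2)) x := by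
  have hw' : HasDerivAt (fun τ => 1 + (κ - 1) * τ) (κ - 1) x := by
    simpa using ((hasDerivAt_id x).const_mul (κ - 1)).const_add 1
  refine ((((hasDerivAt_const x κ).div hw' hw).sub
    (hasDerivAt_log_one_add_mul_div_one_sub hx hw)).div_const 2 :
      HasDerivAt (throughputDeriv κ) _ x).congr_deriv ?_
  field_simp
  ring

theorem min_one_le_one_add_sub_one_mul (hx : x ∈ Icc 0 1) : min 1 κ ≤ 1 + (κ - 1) * x := by
  have h1 := min_le_left 1 κ
  have h2 := min_le_right 1 κ
  nlinarith [hx.1, hx.2]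

theorem one_add_sub_one_mul_pos (hκ : 0 < κ) (hx : x ∈ Icc 0 1) : 0 < 1 + (κ - 1) * x :=
  (lt_min one_pos hκ).trans_le (min_one_le_one_add_sub_one_mul hx)

theorem throughputDeriv_eq_zero_iff :
    throughputDeriv κ x = 0 ↔ log (1 + κ * x / (1 - x)) = κ / (1 + (κ - 1) * x) := by
  rw [throughputDeriv, div_eq_zero_iff, sub_eq_zero, eq_comm]
  simp

variable (hκ : 0 < κ)
include hκ

theorem hasDerivAt_throughput_of_mem_Ico (hx : x ∈ Ico 0 1) :
    HasDerivAt (throughput κ) (throughputDeriv κ x) x :=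
  hasDerivAt_throughput hx.2.ne (one_add_sub_one_mul_pos hκ (Ico_subset_Icc_self hx)).ne'

theorem strictAntiOn_throughputDeriv : StrictAntiOn (throughputDeriv κ) (Ico 0 1) := by
  have hderiv : ∀ x ∈ Ico (0 : ℝ) 1, HasDerivAt (throughputDeriv κ)
      (-κ ^ 2 / (2 * (1 - x) * (1 + (κ - 1) * x) ^ 2)) x := fun x hx =>
    hasDerivAt_throughputDeriv hx.2.ne (one_add_sub_one_mul_pos hκ (Ico_subset_Icc_self hx)).ne'
  refine strictAntiOn_of_deriv_neg (convex_Ico 0 1) (HasDerivAt.continuousOn hderiv) ?_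
  intro x hx
  rw [interior_Ico] at hx
  have hw := one_add_sub_one_mul_pos hκ (Ioo_subset_Icc_self hx)
  have h1x : 0 < 1 - x := sub_pos.mpr hx.2
  rw [(hderiv x (Ioo_subset_Ico_self hx)).deriv]
  exact div_neg_of_neg_of_pos (neg_neg_of_pos (pow_pos hκ 2)) (by positivity)

theorem strictConcaveOn_throughput : StrictConcaveOn ℝ (Ico 0 1) (throughput κ) := by
  refine StrictAntiOn.strictConcaveOn_of_deriv (convex_Ico 0 1)
    (HasDerivAt.continuousOn fun x hx => hasDerivAt_throughput_of_mem_Ico hκ hx) ?_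
  rw [interior_Ico]
  refine (strictAntiOn_throughputDeriv hκ).mono Ioo_subset_Ico_self |>.congr fun x hx => ?_
  exact ((hasDerivAt_throughput_of_mem_Ico hκ (Ioo_subset_Ico_self hx)).deriv).symm

theorem throughputDeriv_le (hx : x ∈ Ico 0 1) :
    throughputDeriv κ x ≤ (κ / min 1 κ - log (min 1 κ) + log (1 - x)) / 2 := by
  have hm : 0 < min 1 κ := lt_min one_pos hκ
  have hwm := min_one_le_one_add_sub_one_mul (κ := κ) (Ico_subset_Icc_self hx)
  have hw := hm.trans_le hwm
  rw [throughputDeriv, one_add_mul_div_one_sub hx.2.ne, log_div hw.ne' (sub_pos.mpr hx.2).ne']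
  gcongr ?_ / 2
  have := div_le_div_of_nonneg_left hκ.le hm hwm
  have := log_le_log hm hwm
  linarith

theorem exists_throughputDeriv_neg : ∃ b ∈ Ioo 0 1, throughputDeriv κ b < 0 := by
  -- `throughputDeriv_le` bounds everything but `log (1 - b)` by `C - 1`; take `log (1 - b) = -C`.
  set C := κ / min 1 κ - log (min 1 κ) + 1
  have hC : 0 < C := by
    have := div_pos hκ (lt_min one_pos hκ)
    have := log_nonpos (lt_min one_pos hκ).le (min_le_left 1 κ)
    linarith
  have hb : 1 - exp (-C) ∈ Ioo 0 1 :=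
    ⟨sub_pos.mpr (exp_lt_one_iff.mpr (neg_lt_zero.mpr hC)), sub_lt_self 1 (exp_pos _)⟩
  refine ⟨1 - exp (-C), hb, (throughputDeriv_le hκ (Ioo_subset_Ico_self hb)).trans_lt ?_⟩
  rw [sub_sub_cancel, log_exp]
  linarith

theorem exists_throughputDeriv_eq_zero : ∃ τ ∈ Ioo 0 1, throughputDeriv κ τ = 0 := by
  obtain ⟨b, hb, hφb⟩ := exists_throughputDeriv_neg hκ
  have hcont : ContinuousOn (throughputDeriv κ) (Icc 0 b) :=
    HasDerivAt.continuousOn fun x hx => hasDerivAt_throughputDeriv (hx.2.trans_lt hb.2).ne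
      (one_add_sub_one_mul_pos hκ ⟨hx.1, hx.2.trans hb.2.le⟩).ne'
  have hφ0 : 0 < throughputDeriv κ 0 := by simpa [throughputDeriv] using hκ
  obtain ⟨τ, hτ, hτ0⟩ := intermediate_value_Ioo' hb.1.le hcont ⟨hφb, hφ0⟩
  exact ⟨τ, ⟨hτ.1, hτ.2.trans hb.2⟩, hτ0⟩

end

/-- The upper-bound throughput `g(τ) = ((1−τ)/2)·log(1 + κτ/(1−τ))` of the
harvest-then-cooperate protocol is strictly concave on `[0,1)`, attains its maximum over
`[0,1)` at a unique point `τ* ∈ (0,1)`, and `τ*` is the unique solution in `(0,1)` of the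
first-order condition `log(1 + κτ/(1−τ)) = κ/(1 + (κ−1)τ)`. -/
theorem optimal_time_split (κ : ℝ) (hκ : 0 < κ)
    (g : ℝ → ℝ) (hg : ∀ τ, g τ = (1 - τ) / 2 * Real.log (1 + κ * τ / (1 - τ))) :
    StrictConcaveOn ℝ (Set.Ico (0:ℝ) 1) g ∧
    ∃ τs ∈ Set.Ioo (0:ℝ) 1,
      IsMaxOn g (Set.Ico (0:ℝ) 1) τs ∧
      (∀ τ' ∈ Set.Ico (0:ℝ) 1, IsMaxOn g (Set.Ico (0:ℝ) 1) τ' → τ' = τs) ∧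
      Real.log (1 + κ * τs / (1 - τs)) = κ / (1 + (κ - 1) * τs) ∧
      (∀ τ' ∈ Set.Ioo (0:ℝ) 1,
        Real.log (1 + κ * τ' / (1 - τ')) = κ / (1 + (κ - 1) * τ') → τ' = τs) := by
  obtain rfl : g = throughput κ := funext hg
  have hconcave := strictConcaveOn_throughput hκ
  obtain ⟨τs, hτs, hroot⟩ := exists_throughputDeriv_eq_zero hκ
  have hmax : IsMaxOn (throughput κ) (Ico 0 1) τs := by
    refine hconcave.concaveOn.isMaxOn_of_hasDerivAt_eq_zero (by rwa [interior_Ico]) ?_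
    exact hroot ▸ hasDerivAt_throughput_of_mem_Ico hκ (Ioo_subset_Ico_self hτs)
  refine ⟨hconcave, τs, hτs, hmax, fun τ hτ hτmax => ?_, throughputDeriv_eq_zero_iff.mp hroot,
    fun τ hτ hfoc => ?_⟩
  · exact hconcave.eq_of_isMaxOn hτmax hmax hτ (Ioo_subset_Ico_self hτs)
  · exact (strictAntiOn_throughputDeriv hκ).injOn (Ioo_subset_Ico_self hτ)
      (Ioo_subset_Ico_self hτs) ((throughputDeriv_eq_zero_iff.mpr hfoc).trans hroot.symm)
end

section
/- Let D, b, c > 0 and K > 0, set k = K/(2Dbc) and x̂ = √(1/2 + k²/(2√(k² + k⁴))), and define f₃(x) = Kx² + 2Dbc·x√(1 − x²) + Dc² for x ∈ [0,1]. Then x̂ ∈ (0,1) is the unique zero of f₃′ in [0,1], f₃ is strictly increasing on [0, x̂], and f₃ is strictly decreasing on [x̂, 1]. -/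
/-!
Writing `K = 2Dbc·k`, we have `f₃ = 2Dbc · g + Dc²` with `g x = k x² + x √(1 - x²)`.
For `x ∈ [0, 1)` put `p = 2x² - 1` and `q = 2x √(1 - x²)`, so that `(p, q)` lies on the upper
unit semicircle and `√(1 - x²) · g'(x) = k q - p`. This is `√(1 + k²)` times the cross product
of `(p₀, q₀) = (k, 1)/√(1 + k²)` with `(p, q)`, and on the upper semicircle that cross product
is a positive multiple of `p₀ - p = 2(x̂² - x²)`. Hence `g'` has the sign of `x̂ - x` on `[0, 1)`,
while at `x = 1` the function `g` is not differentiable at all.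
-/

open Set

lemma exists_pos_mul_sub_mul_eq_mul_sub {p q p₀ q₀ : ℝ} (hq : 0 ≤ q) (hq₀ : 0 < q₀)
    (h : p ^ 2 + q ^ 2 = 1) (h₀ : p₀ ^ 2 + q₀ ^ 2 = 1) :
    ∃ c > 0, p₀ * q - p * q₀ = c * (p₀ - p) := by
  have hsum : 0 < q + q₀ := by linarith
  have hcos : 0 < 1 + p * p₀ + q * q₀ := by
    nlinarith [sq_nonneg (p + p₀), mul_nonneg hq hq₀.le]
  refine ⟨(1 + p * p₀ + q * q₀) / (q + q₀), div_pos hcos hsum, ?_⟩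
  field_simp
  linear_combination p₀ * h - p * h₀

lemma not_differentiableAt_mul_sqrt_one_sub_sq :
    ¬ DifferentiableAt ℝ (fun x : ℝ => x * √(1 - x ^ 2)) 1 := by
  intro h
  set u := fun x : ℝ => x * √(1 - x ^ 2)
  -- `u² = x² (1 - x²)` on `[-1, 1]` and `u = 0` outside, so `u² + x⁴ - x²` is minimal at `1`,
  -- where its derivative would be `2`.
  have hmin : IsLocalMin (fun x => u x ^ 2 + (x ^ 4 - x ^ 2)) 1 := by
    refine IsMinOn.isLocalMin (isMinOn_univ_iff.2 fun x => ?_) Filter.univ_mem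
    have := mul_le_mul_of_nonneg_left (le_max_left (1 - x ^ 2) 0) (sq_nonneg x)
    simp only [u, mul_pow, Real.sq_sqrt']
    norm_num
    nlinarith
  have := hmin.hasDerivAt_eq_zero
    ((h.hasDerivAt.pow 2).add ((hasDerivAt_pow 4 1).sub (hasDerivAt_pow 2 1)))
  norm_num [u] at this

lemma hasDerivAt_const_mul_add_const_iff {f : ℝ → ℝ} {m c f' x : ℝ} (hm : m ≠ 0) :
    HasDerivAt (fun y => m * f y + c) (m * f') x ↔ HasDerivAt f f' x := by
  rw [hasDerivAt_add_const_iff]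
  refine ⟨fun h => ?_, fun h => h.const_mul m⟩
  simpa [hm] using h.const_mul m⁻¹

noncomputable def relayShape (k x : ℝ) : ℝ := k * x ^ 2 + x * √(1 - x ^ 2)

noncomputable def relayPeak (k : ℝ) : ℝ := √((1 + k / √(1 + k ^ 2)) / 2)

lemma abs_div_sqrt_one_add_sq_lt_one (k : ℝ) : |k / √(1 + k ^ 2)| < 1 := by
  rw [abs_div, abs_of_pos (Real.sqrt_pos.2 (by positivity)),
    div_lt_one (Real.sqrt_pos.2 (by positivity)), Real.lt_sqrt (abs_nonneg k), sq_abs]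
  linarith

lemma two_mul_relayPeak_sq_sub_one (k : ℝ) : 2 * relayPeak k ^ 2 - 1 = k / √(1 + k ^ 2) := by
  have := (abs_lt.1 (abs_div_sqrt_one_add_sq_lt_one k)).1
  rw [relayPeak, Real.sq_sqrt (by linarith)]
  ring

lemma relayPeak_mem_Ioo (k : ℝ) : relayPeak k ∈ Ioo 0 1 := by
  obtain ⟨h₁, h₂⟩ := abs_lt.1 (abs_div_sqrt_one_add_sq_lt_one k)
  exact ⟨Real.sqrt_pos.2 (by linarith), (Real.sqrt_lt' one_pos).2 (by linarith)⟩

lemma relayPeak_eq_of_pos {k : ℝ} (hk : 0 < k) :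
    relayPeak k = √(1 / 2 + k ^ 2 / (2 * √(k ^ 2 + k ^ 4))) := by
  have hs : √(k ^ 2 + k ^ 4) = k * √(1 + k ^ 2) := by
    rw [show k ^ 2 + k ^ 4 = k ^ 2 * (1 + k ^ 2) by ring, Real.sqrt_mul (sq_nonneg k),
      Real.sqrt_sq hk.le]
  have : 0 < √(1 + k ^ 2) := Real.sqrt_pos.2 (by positivity)
  rw [relayPeak, hs]
  congr 1
  field_simp

lemma hasDerivAt_relayShape (k : ℝ) {x : ℝ} (hx : x ∈ Ioo (-1) 1) :
    HasDerivAt (relayShape k) (2 * k * x + (1 - 2 * x ^ 2) / √(1 - x ^ 2)) x := by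
  have h : 0 < 1 - x ^ 2 := by nlinarith [hx.1, hx.2]
  have hroot : HasDerivAt (fun y => √(1 - y ^ 2)) (-(2 * x) / (2 * √(1 - x ^ 2))) x := by
    simpa using ((hasDerivAt_pow 2 x).const_sub 1).sqrt h.ne'
  refine (((hasDerivAt_pow 2 x).const_mul k).add ((hasDerivAt_id' x).mul hroot)).congr_deriv ?_
  field_simp
  rw [Real.sq_sqrt h.le]
  ring

lemma exists_pos_hasDerivAt_relayShape (k : ℝ) {x : ℝ} (hx : x ∈ Ico 0 1) :
    ∃ c > 0, HasDerivAt (relayShape k) (c * (relayPeak k - x)) x := by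
  set s := √(1 + k ^ 2) with hs_def
  set r := √(1 - x ^ 2) with hr_def
  have hs : 0 < s := Real.sqrt_pos.2 (by positivity)
  have hs2 : s ^ 2 = 1 + k ^ 2 := Real.sq_sqrt (by positivity)
  have h : 0 < 1 - x ^ 2 := by nlinarith [hx.1, hx.2]
  have hr : 0 < r := Real.sqrt_pos.2 h
  have hr2 : r ^ 2 = 1 - x ^ 2 := Real.sq_sqrt h.le
  obtain ⟨c, hc, hcross⟩ := exists_pos_mul_sub_mul_eq_mul_sub
    (p := 2 * x ^ 2 - 1) (q := 2 * x * r) (p₀ := k / s) (q₀ := 1 / s)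
    (by have := hx.1; positivity) (by positivity)
    (by linear_combination 4 * x ^ 2 * hr2) (by field_simp; linarith)
  have hpeak := (relayPeak_mem_Ioo k).1
  refine ⟨2 * s * c * (relayPeak k + x) / r, by have := hx.1; positivity, ?_⟩
  convert hasDerivAt_relayShape k ⟨by linarith [hx.1], hx.2⟩ using 1
  have hp₀ := two_mul_relayPeak_sq_sub_one k
  rw [← hs_def] at hp₀
  field_simp at hcross hp₀
  field_simp
  rw [← hr_def]
  linear_combination r * (-hcross + c * hp₀)

lemma continuous_relayShape (k : ℝ) : Continuous (relayShape k) := by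
  unfold relayShape
  fun_prop

lemma not_differentiableAt_relayShape_one (k : ℝ) : ¬ DifferentiableAt ℝ (relayShape k) 1 := by
  intro h
  have hsplit : (fun x => relayShape k x - k * x ^ 2) = fun x => x * √(1 - x ^ 2) := by
    ext x
    rw [relayShape]
    ring
  exact not_differentiableAt_mul_sqrt_one_sub_sq
    (hsplit ▸ h.fun_sub ((differentiableAt_pow 2).const_mul k))

lemma hasDerivAt_relayShape_relayPeak (k : ℝ) : HasDerivAt (relayShape k) 0 (relayPeak k) := by
  obtain ⟨hpos, hlt⟩ := relayPeak_mem_Ioo k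
  obtain ⟨c, -, h⟩ := exists_pos_hasDerivAt_relayShape k ⟨hpos.le, hlt⟩
  simpa using h

lemma eq_relayPeak_of_hasDerivAt_zero {k x : ℝ} (hx : x ∈ Icc 0 1)
    (h : HasDerivAt (relayShape k) 0 x) : x = relayPeak k := by
  obtain hx1 | rfl := hx.2.lt_or_eq
  · obtain ⟨c, hc, h'⟩ := exists_pos_hasDerivAt_relayShape k ⟨hx.1, hx1⟩
    have := (mul_eq_zero.1 (h'.unique h)).resolve_left hc.ne'
    linarith
  · exact absurd h.differentiableAt (not_differentiableAt_relayShape_one k)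

lemma strictMonoOn_relayShape (k : ℝ) : StrictMonoOn (relayShape k) (Icc 0 (relayPeak k)) := by
  refine strictMonoOn_of_deriv_pos (convex_Icc _ _) (continuous_relayShape k).continuousOn
    fun x hx => ?_
  rw [interior_Icc] at hx
  obtain ⟨c, hc, h⟩ :=
    exists_pos_hasDerivAt_relayShape k ⟨hx.1.le, hx.2.trans (relayPeak_mem_Ioo k).2⟩
  rw [h.deriv]
  exact mul_pos hc (sub_pos.2 hx.2)

lemma strictAntiOn_relayShape (k : ℝ) : StrictAntiOn (relayShape k) (Icc (relayPeak k) 1) := by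
  refine strictAntiOn_of_deriv_neg (convex_Icc _ _) (continuous_relayShape k).continuousOn
    fun x hx => ?_
  rw [interior_Icc] at hx
  obtain ⟨c, hc, h⟩ :=
    exists_pos_hasDerivAt_relayShape k ⟨(relayPeak_mem_Ioo k).1.trans hx.1 |>.le, hx.2⟩
  rw [h.deriv]
  exact mul_neg_of_pos_of_neg hc (sub_neg.2 hx.1)

/-- For `K > 0`, with `k = K/(2Dbc)` and `x̂ = √(1/2 + k²/(2√(k² + k⁴)))`, the point `x̂`
lies in `(0,1)`, is the unique zero of the derivative of
`f₃(x) = Kx² + 2Dbc·x√(1 − x²) + Dc²` on `[0,1]`, and `f₃` is strictly increasing on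
`[0, x̂]` and strictly decreasing on `[x̂, 1]`. -/
theorem relay_branch_unimodal (D b c K : ℝ) (hD : 0 < D) (hb : 0 < b) (hc : 0 < c)
    (hK : 0 < K)
    (k : ℝ) (hk : k = K / (2 * D * b * c))
    (xhat : ℝ) (hxhat : xhat = Real.sqrt (1 / 2 + k ^ 2 / (2 * Real.sqrt (k ^ 2 + k ^ 4))))
    (f₃ : ℝ → ℝ)
    (hf₃ : ∀ x, f₃ x = K * x ^ 2 + 2 * D * b * c * x * Real.sqrt (1 - x ^ 2) + D * c ^ 2) :
    xhat ∈ Set.Ioo (0:ℝ) 1 ∧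
    HasDerivAt f₃ 0 xhat ∧
    (∀ x ∈ Set.Icc (0:ℝ) 1, HasDerivAt f₃ 0 x → x = xhat) ∧
    StrictMonoOn f₃ (Set.Icc (0:ℝ) xhat) ∧
    StrictAntiOn f₃ (Set.Icc xhat 1) := by
  have hM : 0 < 2 * D * b * c := by positivity
  have hf : f₃ = fun x => 2 * D * b * c * relayShape k x + D * c ^ 2 := by
    ext x
    rw [hf₃, relayShape, hk]
    field_simp
  have hderiv (x : ℝ) : HasDerivAt f₃ 0 x ↔ HasDerivAt (relayShape k) 0 x := by
    rw [hf, ← hasDerivAt_const_mul_add_const_iff hM.ne' (f := relayShape k), mul_zero]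
  have haffine : StrictMono fun y => 2 * D * b * c * y + D * c ^ 2 :=
    (strictMono_mul_left_of_pos hM).add_const _
  rw [← relayPeak_eq_of_pos (by rw [hk]; positivity)] at hxhat
  subst hxhat
  refine ⟨relayPeak_mem_Ioo k, (hderiv _).2 (hasDerivAt_relayShape_relayPeak k),
    fun x hx h => eq_relayPeak_of_hasDerivAt_zero hx ((hderiv x).1 h), ?_, ?_⟩
  · rw [hf]
    exact haffine.comp_strictMonoOn (strictMonoOn_relayShape k)
  · rw [hf]
    exact haffine.comp_strictAntiOn (strictAntiOn_relayShape k)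
end

section
/- Let (Ω, μ) be a probability space and let γ₁, γ₂ : Ω → ℝ be measurable functions that are strictly positive almost everywhere, such that log γ₁, log γ₂, and log(1 + γ₁ + γ₂) are integrable. Then ∫ log(1 + γ₁ + γ₂) dμ ≥ log(1 + exp(∫ log γ₁ dμ) + exp(∫ log γ₂ dμ)). -/
/-!
The map `x ↦ log ∑ᵢ exp xᵢ` is convex, and its tangent plane at a point `a` is an affine
minorant whose slopes are the softmax weights `exp aᵢ / ∑ⱼ exp aⱼ`; the tangent-plane
inequality is concavity of `log` for these weights. Taking `a` to be the vector of means and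
integrating the minorant gives Jensen's inequality. The theorem is the case of the three
coordinates `0, log γ₁, log γ₂`.
-/

open MeasureTheory Real

section LogSumExp

variable {ι : Type*} [Fintype ι]

noncomputable def Real.softmax (a : ι → ℝ) (i : ι) : ℝ :=
  exp (a i) / ∑ j, exp (a j)

theorem Real.softmax_nonneg (a : ι → ℝ) (i : ι) : 0 ≤ softmax a i := by
  unfold softmax
  positivity

variable [Nonempty ι]

theorem Real.sum_exp_pos (a : ι → ℝ) : 0 < ∑ i, exp (a i) :=
  Finset.sum_pos (fun i _ => exp_pos (a i)) Finset.univ_nonempty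

theorem Real.sum_softmax (a : ι → ℝ) : ∑ i, softmax a i = 1 := by
  simp only [softmax]
  rw [← Finset.sum_div, div_self (sum_exp_pos a).ne']

theorem Real.log_sum_exp_add_sum_softmax_mul_sub_le (a x : ι → ℝ) :
    log (∑ i, exp (a i)) + ∑ i, softmax a i * (x i - a i) ≤ log (∑ i, exp (x i)) := by
  have hconcave := strictConcaveOn_log_Ioi.concaveOn.le_map_sum (t := Finset.univ)
    (p := fun i => exp (x i - a i)) (fun i _ => softmax_nonneg a i) (sum_softmax a)
    (fun i _ => exp_pos _)
  have hmean : ∑ i, softmax a i * exp (x i - a i) = (∑ i, exp (x i)) / ∑ i, exp (a i) := by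
    rw [Finset.sum_div]
    refine Finset.sum_congr rfl fun i _ => ?_
    rw [softmax, exp_sub]
    field_simp
  simp only [smul_eq_mul, log_exp, hmean] at hconcave
  rw [log_div (sum_exp_pos x).ne' (sum_exp_pos a).ne'] at hconcave
  linarith

theorem MeasureTheory.log_sum_exp_integral_le_integral_log_sum_exp {Ω : Type*}
    [MeasurableSpace Ω] {μ : Measure Ω} [IsProbabilityMeasure μ] {X : ι → Ω → ℝ}
    (hX : ∀ i, Integrable (X i) μ) (hlse : Integrable (fun ω => log (∑ i, exp (X i ω))) μ) :
    log (∑ i, exp (∫ ω, X i ω ∂μ)) ≤ ∫ ω, log (∑ i, exp (X i ω)) ∂μ := by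
  set a := fun i => ∫ ω, X i ω ∂μ
  have hcentered : ∀ i, Integrable (fun ω => softmax a i * (X i ω - a i)) μ := fun i =>
    ((hX i).sub (integrable_const _)).const_mul _
  have hcentered_sum := integrable_finsetSum Finset.univ fun i _ => hcentered i
  have hmean_zero : ∫ ω, ∑ i, softmax a i * (X i ω - a i) ∂μ = 0 := by
    rw [integral_finsetSum _ fun i _ => hcentered i]
    refine Finset.sum_eq_zero fun i _ => ?_
    rw [integral_const_mul, integral_sub (hX i) (integrable_const _), integral_const,
      probReal_univ, one_smul, sub_self, mul_zero]
  calc log (∑ i, exp (a i))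
      = ∫ ω, (log (∑ i, exp (a i)) + ∑ i, softmax a i * (X i ω - a i)) ∂μ := by
        rw [integral_add (integrable_const _) hcentered_sum, hmean_zero, integral_const,
          probReal_univ, one_smul, add_zero]
    _ ≤ ∫ ω, log (∑ i, exp (X i ω)) ∂μ :=
        integral_mono ((integrable_const _).add hcentered_sum) hlse
          fun ω => log_sum_exp_add_sum_softmax_mul_sub_le a fun i => X i ω

end LogSumExp

theorem jensen_log_throughput_general {Ω : Type*} [MeasurableSpace Ω]
    (μ : Measure Ω) [IsProbabilityMeasure μ]
    (γ₁ γ₂ : Ω → ℝ)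
    (hpos₁ : ∀ᵐ ω ∂μ, 0 < γ₁ ω) (hpos₂ : ∀ᵐ ω ∂μ, 0 < γ₂ ω)
    (hint₁ : Integrable (fun ω => Real.log (γ₁ ω)) μ)
    (hint₂ : Integrable (fun ω => Real.log (γ₂ ω)) μ)
    (hint₃ : Integrable (fun ω => Real.log (1 + γ₁ ω + γ₂ ω)) μ) :
    ∫ ω, Real.log (1 + γ₁ ω + γ₂ ω) ∂μ ≥
      Real.log (1 + Real.exp (∫ ω, Real.log (γ₁ ω) ∂μ)
        + Real.exp (∫ ω, Real.log (γ₂ ω) ∂μ)) := by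
  set X : Fin 3 → Ω → ℝ := ![0, fun ω => log (γ₁ ω), fun ω => log (γ₂ ω)]
  have hlse : (fun ω => log (∑ i, exp (X i ω))) =ᵐ[μ] fun ω => log (1 + γ₁ ω + γ₂ ω) := by
    filter_upwards [hpos₁, hpos₂] with ω h₁ h₂
    simp [X, Fin.sum_univ_three, exp_log h₁, exp_log h₂]
  have hjensen := log_sum_exp_integral_le_integral_log_sum_exp (μ := μ) (X := X)
    (by simp [Fin.forall_fin_succ, X, hint₁, hint₂]) (hint₃.congr hlse.symm)
  rw [ge_iff_le, ← integral_congr_ae hlse]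
  simpa [X, Fin.sum_univ_three] using hjensen

/-- Jensen-type inequality used to lower-bound the average throughput:
`∫ log(1 + γ₁ + γ₂) dμ ≥ log(1 + exp(∫ log γ₁ dμ) + exp(∫ log γ₂ dμ))`. -/
theorem jensen_log_throughput {Ω : Type*} [MeasurableSpace Ω]
    (μ : Measure Ω) [IsProbabilityMeasure μ]
    (γ₁ γ₂ : Ω → ℝ) (hm₁ : Measurable γ₁) (hm₂ : Measurable γ₂)
    (hpos₁ : ∀ᵐ ω ∂μ, 0 < γ₁ ω) (hpos₂ : ∀ᵐ ω ∂μ, 0 < γ₂ ω)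
    (hint₁ : Integrable (fun ω => Real.log (γ₁ ω)) μ)
    (hint₂ : Integrable (fun ω => Real.log (γ₂ ω)) μ)
    (hint₃ : Integrable (fun ω => Real.log (1 + γ₁ ω + γ₂ ω)) μ) :
    ∫ ω, Real.log (1 + γ₁ ω + γ₂ ω) ∂μ ≥
      Real.log (1 + Real.exp (∫ ω, Real.log (γ₁ ω) ∂μ)
        + Real.exp (∫ ω, Real.log (γ₂ ω) ∂μ)) :=
  jensen_log_throughput_general μ γ₁ γ₂ hpos₁ hpos₂ hint₁ hint₂ hint₃
end

section
/- Let N ≥ 1 be an integer and let a > 0, n > 0 be real numbers. Then n ∫₀^∞ x^{n−1} · (1/(N−1)!) · (∫_{√(x/a)}^∞ u^{N−1} e^{−u} du) dx = 2n aⁿ ∑_{m=0}^{N−1} Γ(2n + m)/m!, where Γ is the Gamma function. -/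
/-!
For integer order the upper incomplete Gamma function is elementary:
`∫_t^∞ u^K e^{-u} du = K! e^{-t} ∑_{m ≤ K} t^m / m!`, since the right-hand side has derivative
`-t^K e^{-t}` and vanishes at infinity. Substituting `x = a u²` in the outer integral turns each
term `u^m e^{-u} / m!` of the resulting sum into `Γ(2n + m) / m!`.
-/

open MeasureTheory Set Real Filter Finset

theorem hasDerivAt_sum_range_succ_pow_div_factorial (K : ℕ) (u : ℝ) :
    HasDerivAt (fun u : ℝ => ∑ m ∈ range (K + 1), u ^ m / m.factorial)
      (∑ m ∈ range K, u ^ m / m.factorial) u := by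
  induction K with
  | zero => simpa using hasDerivAt_const u (1 : ℝ)
  | succ K ih =>
    have hpow : HasDerivAt (fun u : ℝ => u ^ (K + 1) / (K + 1).factorial)
        (u ^ K / K.factorial) u := by
      refine ((hasDerivAt_pow (K + 1) u).div_const _).congr_deriv ?_
      rw [Nat.factorial_succ, Nat.add_sub_cancel]
      push_cast
      field_simp
    simpa only [sum_range_succ] using ih.fun_add hpow

theorem hasDerivAt_exp_neg_mul_sum_range_succ_pow_div_factorial (K : ℕ) (u : ℝ) :
    HasDerivAt (fun u : ℝ => exp (-u) * ∑ m ∈ range (K + 1), u ^ m / m.factorial)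
      (-(u ^ K * exp (-u) / K.factorial)) u := by
  have hexp : HasDerivAt (fun u : ℝ => exp (-u)) (-exp (-u)) u := by
    simpa using (hasDerivAt_neg u).exp
  refine (hexp.fun_mul (hasDerivAt_sum_range_succ_pow_div_factorial K u)).congr_deriv ?_
  rw [sum_range_succ]
  ring

theorem tendsto_exp_neg_mul_sum_pow_div_factorial_atTop (N : ℕ) :
    Tendsto (fun u : ℝ => exp (-u) * ∑ m ∈ range N, u ^ m / m.factorial) atTop (nhds 0) := by
  have hterm : ∀ m ∈ range N, Tendsto (fun u : ℝ => u ^ m * exp (-u) / m.factorial)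
      atTop (nhds 0) := fun m _ => by
    simpa using (tendsto_pow_mul_exp_neg_atTop_nhds_zero m).div_const (m.factorial : ℝ)
  convert tendsto_finsetSum _ hterm using 1
  · ext u
    rw [mul_sum]
    exact sum_congr rfl fun m _ => by ring
  · simp

theorem integral_Ioi_pow_mul_exp_neg (K : ℕ) {t : ℝ} (ht : 0 ≤ t) :
    ∫ u in Ioi t, u ^ K * exp (-u)
      = K.factorial * (exp (-t) * ∑ m ∈ range (K + 1), t ^ m / m.factorial) := by
  set F : ℝ → ℝ := fun u => -(K.factorial * (exp (-u) * ∑ m ∈ range (K + 1), u ^ m / m.factorial))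
  have hderiv : ∀ u ∈ Ioi t, HasDerivAt F (u ^ K * exp (-u)) u := fun u _ => by
    refine ((hasDerivAt_exp_neg_mul_sum_range_succ_pow_div_factorial K u).const_mul
      (K.factorial : ℝ)).neg.congr_deriv ?_
    field_simp
  have hcont : Continuous F := by fun_prop
  have hnonneg : ∀ u ∈ Ioi t, 0 ≤ u ^ K * exp (-u) := fun u hu => by
    have : 0 < u := ht.trans_lt hu
    positivity
  have hlim : Tendsto F atTop (nhds 0) := by
    simpa [F] using ((tendsto_exp_neg_mul_sum_pow_div_factorial_atTop (K + 1)).const_mul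
      (K.factorial : ℝ)).neg
  rw [integral_Ioi_of_hasDerivAt_of_nonneg hcont.continuousWithinAt hderiv hnonneg hlim]
  simp [F]

theorem integral_Ioi_rpow_sub_one_mul_comp_sqrt_div (g : ℝ → ℝ) {a : ℝ} (ha : 0 < a) (s : ℝ) :
    ∫ x in Ioi 0, x ^ (s - 1) * g (√(x / a)) = 2 * a ^ s * ∫ u in Ioi 0, u ^ (2 * s - 1) * g u := by
  set G : ℝ → ℝ := fun y => (a * y) ^ (s - 1) * g (√y)
  have hscale : ∫ x in Ioi 0, x ^ (s - 1) * g (√(x / a)) = a * ∫ y in Ioi 0, G y := by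
    calc ∫ x in Ioi 0, x ^ (s - 1) * g (√(x / a)) = ∫ x in Ioi 0, G (x * a⁻¹) :=
          setIntegral_congr_fun measurableSet_Ioi fun x _ => by
            simp only [G, ← div_eq_mul_inv, mul_div_cancel₀ x ha.ne']
      _ = a * ∫ y in Ioi 0, G y := by
          rw [integral_comp_mul_right_Ioi G 0 (inv_pos.2 ha), zero_mul, inv_inv, smul_eq_mul]
  have hsquare : ∫ y in Ioi 0, G y = ∫ u in Ioi 0, 2 * a ^ (s - 1) * (u ^ (2 * s - 1) * g u) := by
    rw [← integral_comp_rpow_Ioi G two_ne_zero]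
    refine setIntegral_congr_fun measurableSet_Ioi fun u (hu : 0 < u) => ?_
    have hsq : u ^ (2 : ℝ) = u ^ 2 := rpow_two u
    have hpow : (u ^ 2) ^ (s - 1) * u = u ^ (2 * s - 1) := by
      rw [← hsq, ← rpow_mul hu.le, ← rpow_add_one hu.ne']
      ring_nf
    simp only [G, smul_eq_mul, hsq, sqrt_sq hu.le, mul_rpow ha.le (sq_nonneg u), abs_two,
      ← hpow]
    norm_num
    ring
  have hpow : a * a ^ (s - 1) = a ^ s := by
    rw [mul_comm, ← rpow_add_one ha.ne', sub_add_cancel]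
  rw [hscale, hsquare, integral_const_mul, ← hpow]
  ring

theorem integral_Ioi_rpow_mul_exp_neg_mul_sum_pow_div_factorial {s : ℝ} (hs : 0 < s) (N : ℕ) :
    ∫ u in Ioi 0, u ^ (s - 1) * (exp (-u) * ∑ m ∈ range N, u ^ m / m.factorial)
      = ∑ m ∈ range N, Gamma (s + m) / m.factorial := by
  have hterm : ∀ u ∈ Ioi (0 : ℝ), u ^ (s - 1) * (exp (-u) * ∑ m ∈ range N, u ^ m / m.factorial)
      = ∑ m ∈ range N, (m.factorial : ℝ)⁻¹ * (exp (-u) * u ^ (s + m - 1)) := fun u (hu : 0 < u) => by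
    rw [mul_sum, mul_sum]
    refine sum_congr rfl fun m _ => ?_
    rw [show s + m - 1 = (s - 1) + m by ring, rpow_add hu, rpow_natCast]
    ring
  have hint : ∀ m ∈ range N, Integrable
      (fun u => (m.factorial : ℝ)⁻¹ * (exp (-u) * u ^ (s + m - 1))) (volume.restrict (Ioi 0)) :=
    fun m _ => (GammaIntegral_convergent (by positivity)).const_mul _
  rw [setIntegral_congr_fun measurableSet_Ioi hterm, integral_finsetSum _ hint]
  refine sum_congr rfl fun m _ => ?_
  rw [integral_const_mul, ← Gamma_eq_integral (by positivity), inv_mul_eq_div]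

/-- The `n`-th moment of `γ_us = a‖h₁‖⁴` where `‖h₁‖²` is Gamma(N,1)-distributed:
`n ∫₀^∞ x^{n−1} (Γ(N, √(x/a))/Γ(N)) dx = 2 n aⁿ ∑_{m=0}^{N−1} Γ(2n + m)/m!`. -/
theorem moment_gamma_us (N : ℕ) (hN : 1 ≤ N) (a n : ℝ) (ha : 0 < a) (hn : 0 < n) :
    n * ∫ x in Set.Ioi (0:ℝ), x ^ (n - 1) *
        ((1 / ((N - 1).factorial : ℝ)) *
          ∫ u in Set.Ioi (Real.sqrt (x / a)), u ^ (N - 1) * Real.exp (-u)) =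
    2 * n * a ^ n * ∑ m ∈ Finset.range N, Real.Gamma (2 * n + m) / (m.factorial : ℝ) := by
  obtain ⟨K, rfl⟩ : ∃ K, N = K + 1 := ⟨N - 1, by omega⟩
  have hinner : ∀ x : ℝ, (1 / (K.factorial : ℝ)) * ∫ u in Ioi √(x / a), u ^ K * exp (-u)
      = exp (-√(x / a)) * ∑ m ∈ range (K + 1), √(x / a) ^ m / m.factorial := fun x => by
    rw [integral_Ioi_pow_mul_exp_neg K (sqrt_nonneg _)]
    field_simp
  have hsubst := integral_Ioi_rpow_sub_one_mul_comp_sqrt_div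
    (fun u => exp (-u) * ∑ m ∈ range (K + 1), u ^ m / m.factorial) ha n
  simp only [Nat.add_sub_cancel, hinner] at hsubst ⊢
  rw [hsubst, integral_Ioi_rpow_mul_exp_neg_mul_sum_pow_div_factorial (by positivity)]
  ring
end

section
/- Let N ≥ 2 be an integer and let x > 0 be a real number. Then ∫₀¹ (N−1)(1−v)^{N−2} · e^{−√(x/v)} · (∑_{m=0}^{N−1} (x/v)^{m/2}/m!) dv = 2 ∑_{m=0}^{N−1} ∑_{i=0}^{N−2} binom(N−2, i) · ((−1)^i (N−1)/m!) · x^{i+1} · ∫_{√x}^∞ u^{m−2i−3} e^{−u} du, where the inner integral is the upper incomplete Gamma function Γ(m − 2i − 2, √x). -/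
open MeasureTheory Set Real

/-!
Expand `(1 - v)^(N-2)` binomially and exchange the two finite sums with the integral. In each
term substitute `v = x / u²`: then `√(x/v) = u` and `dv = 2x u⁻³ du`, so the factor `v^i` becomes
`x^i u^(-2i)` and the term turns into `2 x^(i+1) ∫_{√x}^∞ u^(m-2i-3) e^(-u) du`. Each term is
integrable on `(0, 1)` because `t^m e^(-t) ≤ m!`.
-/

lemma pow_mul_exp_neg_le_factorial (m : ℕ) {t : ℝ} (ht : 0 ≤ t) :
    t ^ m * exp (-t) ≤ m.factorial := by
  have := Real.pow_div_factorial_le_exp t ht m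
  rw [div_le_iff₀ (by positivity)] at this
  calc t ^ m * exp (-t) ≤ exp t * m.factorial * exp (-t) := by gcongr
    _ = m.factorial := by rw [mul_right_comm, ← exp_add, add_neg_cancel, exp_zero, one_mul]

lemma integrableOn_pow_mul_sqrt_div_pow_mul_exp (x : ℝ) (i m : ℕ) :
    IntegrableOn (fun v => v ^ i * (√(x / v) ^ m * exp (-√(x / v)))) (Ioo 0 1) := by
  refine IntegrableOn.of_bound measure_Ioo_lt_top (by fun_prop) (m.factorial) ?_
  rw [ae_restrict_iff' measurableSet_Ioo]
  filter_upwards with v ⟨hv0, hv1⟩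
  have hvi : v ^ i ≤ 1 := pow_le_one₀ hv0.le hv1.le
  have hexp := pow_mul_exp_neg_le_factorial m (sqrt_nonneg (x / v))
  rw [norm_of_nonneg (by positivity)]
  calc _ ≤ 1 * (m.factorial : ℝ) := by gcongr
    _ = m.factorial := one_mul _

lemma image_sq_div_sq_Ioi {a : ℝ} (ha : 0 < a) : (fun u => a ^ 2 / u ^ 2) '' Ioi a = Ioo 0 1 := by
  ext v
  constructor
  · rintro ⟨u, hu : a < u, rfl⟩
    have hu0 : 0 < u := ha.trans hu
    exact ⟨by positivity, (div_lt_one (by positivity)).2 (by gcongr)⟩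
  · rintro ⟨hv0, hv1⟩
    refine ⟨a / √v, ?_, ?_⟩
    · have hsv : √v < 1 := (sqrt_lt' one_pos).2 (by simpa using hv1)
      exact (lt_div_iff₀ (sqrt_pos.2 hv0)).2 (mul_lt_of_lt_one_right ha hsv)
    · show a ^ 2 / (a / √v) ^ 2 = v
      rw [div_pow, sq_sqrt hv0.le]
      field_simp

lemma integral_Ioo_zero_one_eq_integral_Ioi {a : ℝ} (ha : 0 < a) (g : ℝ → ℝ) :
    ∫ v in Ioo 0 1, g v = ∫ u in Ioi a, 2 * a ^ 2 / u ^ 3 * g (a ^ 2 / u ^ 2) := by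
  have hderiv : ∀ u ∈ Ioi a,
      HasDerivWithinAt (fun u => a ^ 2 / u ^ 2) (-(2 * a ^ 2 / u ^ 3)) (Ioi a) u := by
    intro u hu
    have hu : u ≠ 0 := (ha.trans hu).ne'
    refine (((hasDerivAt_const u (a ^ 2)).div (hasDerivAt_pow 2 u)
      (pow_ne_zero 2 hu)).congr_deriv ?_).hasDerivWithinAt
    field_simp
    norm_num
    ring
  have hinj : InjOn (fun u => a ^ 2 / u ^ 2) (Ioi a) := by
    intro u hu w hw h
    have hu : 0 < u := ha.trans hu
    have hw : 0 < w := ha.trans hw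
    dsimp only at h
    rw [div_eq_mul_inv, div_eq_mul_inv, mul_right_inj' (pow_ne_zero 2 ha.ne'), inv_inj] at h
    exact (pow_left_inj₀ hu.le hw.le two_ne_zero).1 h
  rw [← image_sq_div_sq_Ioi ha,
    integral_image_eq_integral_abs_deriv_smul measurableSet_Ioi hderiv hinj]
  refine setIntegral_congr_fun measurableSet_Ioi fun u hu => ?_
  have hu : 0 < u := ha.trans hu
  rw [abs_neg, abs_of_pos (by positivity), smul_eq_mul]

lemma integral_Ioo_pow_mul_sqrt_div_pow_mul_exp {x : ℝ} (hx : 0 < x) (i m : ℕ) :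
    ∫ v in Ioo 0 1, v ^ i * (√(x / v) ^ m * exp (-√(x / v))) =
      2 * x ^ (i + 1) * ∫ u in Ioi √x, u ^ ((m : ℤ) - 2 * i - 3) * exp (-u) := by
  obtain ⟨a, ha, rfl⟩ : ∃ a, 0 < a ∧ x = a ^ 2 := ⟨√x, sqrt_pos.2 hx, (sq_sqrt hx.le).symm⟩
  rw [sqrt_sq ha.le, integral_Ioo_zero_one_eq_integral_Ioi ha, ← integral_const_mul]
  refine setIntegral_congr_fun measurableSet_Ioi fun u hu => ?_
  have hu : 0 < u := ha.trans hu
  have hsqrt : √(a ^ 2 / (a ^ 2 / u ^ 2)) = u := by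
    rw [div_div_cancel₀ (by positivity), sqrt_sq hu.le]
  have hzpow : u ^ ((m : ℤ) - 2 * i - 3) = u ^ m / u ^ (2 * i + 3) := by
    rw [← zpow_natCast, ← zpow_natCast, ← zpow_sub₀ hu.ne']
    push_cast
    ring_nf
  rw [hsqrt, hzpow, div_pow]
  field_simp
  ring

lemma beta_density_mul_gamma_ccdf_eq_sum {N : ℕ} (hN : 2 ≤ N) {x v : ℝ} (hxv : 0 ≤ x / v) :
    (N - 1 : ℝ) * (1 - v) ^ (N - 2) * exp (-√(x / v)) *
        ∑ m ∈ Finset.range N, (x / v) ^ ((m : ℝ) / 2) / (m.factorial : ℝ) =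
      ∑ m ∈ Finset.range N, ∑ i ∈ Finset.range (N - 1),
        (N - 2).choose i * ((-1 : ℝ) ^ i * (N - 1) / (m.factorial : ℝ)) *
          (v ^ i * (√(x / v) ^ m * exp (-√(x / v)))) := by
  have hbinom : (1 - v) ^ (N - 2) = ∑ i ∈ Finset.range (N - 1), (N - 2).choose i * (-v) ^ i := by
    rw [sub_eq_neg_add, add_pow, show N - 2 + 1 = N - 1 by omega]
    simp only [one_pow, mul_one, mul_comm]
  simp only [rpow_div_two_eq_sqrt _ hxv, rpow_natCast, hbinom, Finset.mul_sum, Finset.sum_mul]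
  refine Finset.sum_congr rfl fun m _ => Finset.sum_congr rfl fun i _ => ?_
  rw [neg_pow]
  ring

/-- Complementary CDF of `νZ²` with `ν ∼ Beta(1, N−1)` and `Z ∼ Gamma(N,1)` independent:
`∫₀¹ (N−1)(1−v)^{N−2} e^{−√(x/v)} ∑_{m=0}^{N−1} (x/v)^{m/2}/m! dv
  = 2 ∑_{m=0}^{N−1} ∑_{i=0}^{N−2} C(N−2,i) ((−1)^i (N−1)/m!) x^{i+1} Γ(m−2i−2, √x)`,
where `Γ(m−2i−2, t) = ∫_t^∞ u^{m−2i−3} e^{−u} du`. -/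
theorem ccdf_nu_Z_sq (N : ℕ) (hN : 2 ≤ N) (x : ℝ) (hx : 0 < x) :
    ∫ v in (0:ℝ)..1, (N - 1 : ℝ) * (1 - v) ^ (N - 2) * Real.exp (-Real.sqrt (x / v)) *
        ∑ m ∈ Finset.range N, (x / v) ^ ((m : ℝ) / 2) / (m.factorial : ℝ) =
    2 * ∑ m ∈ Finset.range N, ∑ i ∈ Finset.range (N - 1),
        (N - 2).choose i * ((-1 : ℝ) ^ i * (N - 1) / (m.factorial : ℝ)) * x ^ (i + 1) *
          ∫ u in Set.Ioi (Real.sqrt x), u ^ ((m : ℤ) - 2 * i - 3) * Real.exp (-u) := by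
  have hint (m i : ℕ) := integrableOn_pow_mul_sqrt_div_pow_mul_exp x i m
  rw [intervalIntegral.integral_of_le zero_le_one, integral_Ioc_eq_integral_Ioo,
    setIntegral_congr_fun measurableSet_Ioo fun v hv =>
      beta_density_mul_gamma_ccdf_eq_sum hN (div_nonneg hx.le hv.1.le),
    integral_finsetSum _ fun m _ => integrable_finsetSum _ fun i _ => (hint m i).const_mul _,
    Finset.mul_sum]
  refine Finset.sum_congr rfl fun m _ => ?_
  rw [integral_finsetSum _ fun i _ => (hint m i).const_mul _, Finset.mul_sum]
  refine Finset.sum_congr rfl fun i _ => ?_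
  rw [integral_const_mul, integral_Ioo_pow_mul_sqrt_div_pow_mul_exp hx]
  ring
end
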